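/- arXiv:2501.01130 — 11 statements merged into one kernel-verified Lean document; each statement's English description precedes it below -/
import Mathlib

section
/- Let (Ω, 𝔉, P) be a probability space, let X : Ω → 𝒳 be a measurable map into a measurable space 𝒳, and let c, c̃ : Ω → Fin C be measurable (finitely valued) random labels. Assume c̃ is conditionally independent of X given c, and that P(c = j) > 0 for every j ∈ Fin C. Define q_j(i) := P(c̃ = i ∧ c = j) / P(c = j). Then for every i ∈ Fin C, P-almost everywhere, E[1_{c̃ = i} | σ(X)] = ∑_{j=1}^C q_j(i) · E[1_{c = j} | σ(X)]; that is, the posterior probability of the noisy label satisfies P(c̃ = i | X) = ∑_j q_j(i) P(c = j | X) almost surely. -/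
open MeasureTheory

/-!
Both sides are `σ(X)`-measurable, so it suffices to compare their integrals over every event
`{X ∈ B}`. Splitting `{c̃ = i, X ∈ B}` along the fibres of `c`, conditional independence turns
`P(c̃ = i, X ∈ B, c = j)` into `q_j(i) · P(X ∈ B, c = j)`, and the latter is the integral of
`P(c = j | X)` over `{X ∈ B}`.
-/

section

variable {Ω ι : Type*} {m m₀ : MeasurableSpace Ω} {μ : Measure Ω}

theorem setIntegral_indicator_one {s t : Set Ω} (ht : MeasurableSet t) :
    ∫ x in s, t.indicator (1 : Ω → ℝ) x ∂μ = μ.real (t ∩ s) := by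
  rw [integral_indicator_one ht, measureReal_restrict_apply ht]

theorem measureReal_eq_sum_measureReal_inter_fiber [IsFiniteMeasure μ] [Fintype ι]
    [MeasurableSpace ι] [MeasurableSingletonClass ι] {c : Ω → ι} (hc : Measurable c) (A : Set Ω) :
    μ.real A = ∑ j, μ.real (c ⁻¹' {j} ∩ A) := by
  rw [← measureReal_restrict_apply_univ, ← Set.preimage_univ (f := c), ← Finset.coe_univ,
    ← sum_measureReal_preimage_singleton _ fun j _ => hc (measurableSet_singleton j)]
  exact Finset.sum_congr rfl fun j _ => measureReal_restrict_apply (hc (measurableSet_singleton j))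

theorem div_mul_measureReal_eq_of_mul_eq [IsFiniteMeasure μ] {E s F : Set Ω}
    (h : μ.real (E ∩ (s ∩ F)) * μ.real F = μ.real (E ∩ F) * μ.real (s ∩ F)) :
    μ.real (E ∩ F) / μ.real F * μ.real (s ∩ F) = μ.real (E ∩ (s ∩ F)) := by
  rcases eq_or_ne (μ.real F) 0 with hF | hF
  · -- the left side vanishes through `x / 0 = 0`
    have hnull : μ.real (E ∩ (s ∩ F)) = 0 :=
      le_antisymm (hF ▸ measureReal_mono fun _ hx => hx.2.2) measureReal_nonneg
    simp [hF, hnull]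
  · field_simp
    linarith

theorem condExp_indicator_eq_sum_div_mul_condExp_indicator_fiber [IsFiniteMeasure μ]
    [Fintype ι] [MeasurableSpace ι] [MeasurableSingletonClass ι]
    (hm : m ≤ m₀) {E : Set Ω} (hE : MeasurableSet E) {c : Ω → ι} (hc : Measurable c)
    (hindep : ∀ j s, MeasurableSet[m] s →
      μ.real (E ∩ (s ∩ c ⁻¹' {j})) * μ.real (c ⁻¹' {j})
        = μ.real (E ∩ c ⁻¹' {j}) * μ.real (s ∩ c ⁻¹' {j})) :
    μ[E.indicator 1 | m] =ᵐ[μ] fun ω => ∑ j,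
      μ.real (E ∩ c ⁻¹' {j}) / μ.real (c ⁻¹' {j}) * μ[(c ⁻¹' {j}).indicator 1 | m] ω := by
  have hfiber (j : ι) : MeasurableSet (c ⁻¹' {j}) := hc (measurableSet_singleton j)
  have hint (t : Set Ω) (ht : MeasurableSet t) : Integrable (t.indicator (1 : Ω → ℝ)) μ :=
    (integrable_const 1).indicator ht
  refine (ae_eq_condExp_of_forall_setIntegral_eq hm (hint E hE) (fun s _ _ => ?_)
    (fun s hs _ => ?_) ?_).symm
  · exact (integrable_finsetSum _ fun j _ => integrable_condExp.const_mul _).integrableOn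
  · calc ∫ x in s, ∑ j, μ.real (E ∩ c ⁻¹' {j}) / μ.real (c ⁻¹' {j})
            * μ[(c ⁻¹' {j}).indicator 1 | m] x ∂μ
        = ∑ j, μ.real (E ∩ c ⁻¹' {j}) / μ.real (c ⁻¹' {j}) * μ.real (c ⁻¹' {j} ∩ s) := by
          rw [integral_finsetSum _ fun j _ => (integrable_condExp.const_mul _).restrict]
          refine Finset.sum_congr rfl fun j _ => ?_
          rw [integral_const_mul, setIntegral_condExp hm (hint _ (hfiber j)) hs,
            setIntegral_indicator_one (hfiber j)]
      _ = ∑ j, μ.real (c ⁻¹' {j} ∩ (E ∩ s)) := by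
          refine Finset.sum_congr rfl fun j _ => ?_
          rw [Set.inter_comm _ s, div_mul_measureReal_eq_of_mul_eq (hindep j s hs)]
          congr 1
          ext
          simp only [Set.mem_inter_iff]
          tauto
      _ = ∫ x in s, E.indicator 1 x ∂μ := by
          rw [setIntegral_indicator_one hE, ← measureReal_eq_sum_measureReal_inter_fiber hc]
  · exact (Finset.stronglyMeasurable_fun_sum _ fun j _ =>
      stronglyMeasurable_condExp.const_mul _).aestronglyMeasurable

end

theorem noisy_label_posterior_general
    {Ω 𝒳 : Type*} [MeasurableSpace Ω] [m𝒳 : MeasurableSpace 𝒳]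
    (μ : Measure Ω) [IsProbabilityMeasure μ]
    (C : ℕ)
    (X : Ω → 𝒳) (hX : Measurable X)
    (c ctil : Ω → Fin C) (hc : Measurable c) (hctil : Measurable ctil)
    (hcondindep : ∀ (i j : Fin C) (B : Set 𝒳), MeasurableSet B →
      (μ {ω | ctil ω = i ∧ X ω ∈ B ∧ c ω = j}).toReal * (μ {ω | c ω = j}).toReal
        = (μ {ω | ctil ω = i ∧ c ω = j}).toReal * (μ {ω | X ω ∈ B ∧ c ω = j}).toReal)
    (q : Fin C → Fin C → ℝ)
    (hq : ∀ j i, q j i = (μ {ω | ctil ω = i ∧ c ω = j}).toReal / (μ {ω | c ω = j}).toReal) :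
    ∀ i : Fin C,
      (μ[Set.indicator {ω | ctil ω = i} (fun _ => (1 : ℝ)) | MeasurableSpace.comap X m𝒳])
        =ᵐ[μ]
      fun ω => ∑ j : Fin C,
        q j i * (μ[Set.indicator {ω' | c ω' = j} (fun _ => (1 : ℝ)) |
          MeasurableSpace.comap X m𝒳]) ω := by
  intro i
  obtain rfl : q = _ := funext fun j => funext (hq j)
  refine condExp_indicator_eq_sum_div_mul_condExp_indicator_fiber hX.comap_le
    (hctil (measurableSet_singleton i)) hc ?_
  rintro j s ⟨B, hB, rfl⟩
  exact hcondindep i j B hB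

/-- The posterior probability of the noisy label is the q-mixture of the posterior
probabilities of the clean label: P(c̃ = i | X) = ∑_j q_j(i) P(c = j | X) a.s.
Conditional independence of c̃ and X given the (finitely valued) label c is stated
explicitly: P(c̃ = i, X ∈ B, c = j) ⬝ P(c = j) = P(c̃ = i, c = j) ⬝ P(X ∈ B, c = j). -/
theorem noisy_label_posterior
    {Ω 𝒳 : Type*} [MeasurableSpace Ω] [m𝒳 : MeasurableSpace 𝒳]
    (μ : Measure Ω) [IsProbabilityMeasure μ]
    (C : ℕ)
    (X : Ω → 𝒳) (hX : Measurable X)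
    (c ctil : Ω → Fin C) (hc : Measurable c) (hctil : Measurable ctil)
    (hpos : ∀ j : Fin C, 0 < μ {ω | c ω = j})
    (hcondindep : ∀ (i j : Fin C) (B : Set 𝒳), MeasurableSet B →
      (μ {ω | ctil ω = i ∧ X ω ∈ B ∧ c ω = j}).toReal * (μ {ω | c ω = j}).toReal
        = (μ {ω | ctil ω = i ∧ c ω = j}).toReal * (μ {ω | X ω ∈ B ∧ c ω = j}).toReal)
    (q : Fin C → Fin C → ℝ)
    (hq : ∀ j i, q j i = (μ {ω | ctil ω = i ∧ c ω = j}).toReal / (μ {ω | c ω = j}).toReal) :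
    ∀ i : Fin C,
      (μ[Set.indicator {ω | ctil ω = i} (fun _ => (1 : ℝ)) | MeasurableSpace.comap X m𝒳])
        =ᵐ[μ]
      fun ω => ∑ j : Fin C,
        q j i * (μ[Set.indicator {ω' | c ω' = j} (fun _ => (1 : ℝ)) |
          MeasurableSpace.comap X m𝒳]) ω :=
  noisy_label_posterior_general (m𝒳 := m𝒳) μ C X hX c ctil hc hctil hcondindep q hq
end

section
/- Let C ≥ 1, K ≥ 1, let π : Fin C → ℝ be a probability vector, let q be a label-corruption matrix, and set a(i) := ∑_{u=1}^C q_u(i) π_u; assume a(i) > 0 for every i. Let A : Fin C × Fin C × (Fin K → Fin C) → ℝ be arbitrary, and define Ã(i, i⁺, j) := (a(i) a(i⁺) ∏_{k=1}^K a(j_k))⁻¹ · ∑_{u, u⁺ ∈ Fin C} ∑_{v : Fin K → Fin C} q_u(i) π_u · q_{u⁺}(i⁺) π_{u⁺} · (∏_{k=1}^K q_{v_k}(j_k) π_{v_k}) · A(u, u⁺, v), and the noisy risk ℛ̃ := ∑_{i ∈ Fin C} ∑_{j : Fin K → Fin C} a(i) · (∏_{k=1}^K a(j_k)) · Ã(i,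 i, j). Then ℛ̃ = ∑_{i ∈ Fin C} a(i)⁻¹ ∑_{u, u⁺ ∈ Fin C} π_u π_{u⁺} q_u(i) q_{u⁺}(i) · ∑_{v : Fin K → Fin C} (∏_{k=1}^K π_{v_k}) · A(u, u⁺, v). -/
/-- Decomposition of the noisy supervised contrastive risk (Lemma 2): the noisy risk
depends only on the noisy positive-pair distribution; negatives marginalize out to the
clean priors. -/
theorem noisy_risk_decomposition
    (C K : ℕ) (hC : 1 ≤ C) (hK : 1 ≤ K)
    (π : Fin C → ℝ) (hπ_nonneg : ∀ j, 0 ≤ π j) (hπ_sum : ∑ j, π j = 1)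
    (q : Fin C → Fin C → ℝ)
    (hq_nonneg : ∀ j i, 0 ≤ q j i) (hq_sum : ∀ j, ∑ i, q j i = 1)
    (a : Fin C → ℝ) (ha : ∀ i, a i = ∑ u, q u i * π u) (ha_pos : ∀ i, 0 < a i)
    (A : Fin C → Fin C → (Fin K → Fin C) → ℝ)
    (Atil : Fin C → Fin C → (Fin K → Fin C) → ℝ)
    (hAtil : ∀ (i ip : Fin C) (j : Fin K → Fin C),
      Atil i ip j = (a i * a ip * ∏ k, a (j k))⁻¹ *
        ∑ u, ∑ up, ∑ v : Fin K → Fin C,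
          q u i * π u * (q up ip * π up) * (∏ k, q (v k) (j k) * π (v k)) * A u up v) :
    (∑ i, ∑ j : Fin K → Fin C, a i * (∏ k, a (j k)) * Atil i i j)
      = ∑ i, (a i)⁻¹ *
          ∑ u, ∑ up, π u * π up * q u i * q up i *
            ∑ v : Fin K → Fin C, (∏ k, π (v k)) * A u up v := by
  refine Finset.sum_congr rfl fun i _ => ?_
  have hai := ha_pos i
  -- simplify the prefactor
  have step1 : ∀ j : Fin K → Fin C,
      a i * (∏ k, a (j k)) * Atil i i j
        = (a i)⁻¹ * ∑ u, ∑ up, ∑ v : Fin K → Fin C,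
            q u i * π u * (q up i * π up) * (∏ k, q (v k) (j k) * π (v k)) * A u up v := by
    intro j
    rw [hAtil]
    have hP : (0 : ℝ) < ∏ k, a (j k) := Finset.prod_pos fun k _ => ha_pos (j k)
    field_simp
  simp only [step1]
  rw [← Finset.mul_sum]
  congr 1
  rw [Finset.sum_comm]
  refine Finset.sum_congr rfl fun u _ => ?_
  rw [Finset.sum_comm]
  refine Finset.sum_congr rfl fun up _ => ?_
  rw [Finset.sum_comm, Finset.mul_sum]
  refine Finset.sum_congr rfl fun v _ => ?_
  have hmarg : ∑ j : Fin K → Fin C, ∏ k, q (v k) (j k) * π (v k)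
      = ∏ k, π (v k) := by
    rw [← Fintype.prod_sum (fun k i => q (v k) i * π (v k))]
    refine Finset.prod_congr rfl fun k _ => ?_
    rw [← Finset.sum_mul, hq_sum, one_mul]
  calc ∑ j : Fin K → Fin C,
        q u i * π u * (q up i * π up) * (∏ k, q (v k) (j k) * π (v k)) * A u up v
      = q u i * π u * (q up i * π up) *
          (∑ j : Fin K → Fin C, ∏ k, q (v k) (j k) * π (v k)) * A u up v := by
        rw [← Finset.sum_mul, ← Finset.mul_sum]
    _ = π u * π up * q u i * q up i * ((∏ k, π (v k)) * A u up v) := by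
        rw [hmarg]; ring
end

section
/- Let C ≥ 2, K ≥ 1, let π be the uniform probability vector on Fin C (π_i = 1/C for all i), let γ ∈ (0,1), and let q be the symmetric-noise corruption matrix: q_i(i) = 1 − γ and q_j(i) = γ/(C−1) for all j ≠ i. Set a(i) := ∑_u q_u(i) π_u. Let A : Fin C × Fin C × (Fin K → Fin C) → ℝ be arbitrary, define the clean risk ℛ := ∑_{u} ∑_{v : Fin K → Fin C} π_u (∏_{k=1}^K π_{v_k}) A(u, u, v), the additional risk Δℛ := ∑_{u, u⁺} ∑_{v : Fin K → Fin C} π_u π_{u⁺} (∏_{k=1}^K π_{v_k}) A(u, u⁺, v), and the noisy risk ℛ̃ := ∑_{i} ∑_{j : Fin K → Fin C} a(i) (∏_{k=1}^K a(j_k)) Ã(i, i, j), where Ã(i, i⁺, j) := (a(i) a(i⁺) ∏_k a(j_k))⁻¹ ∑_{u, u⁺, v} q_u(i) π_u · q_{u⁺}(i⁺) π_{u⁺} · (∏_k q_{v_k}(j_k) π_{v_k}) · A(u, u⁺, v). Then ℛ̃ = (1 − Cγ/(C−1))² · ℛ + (Cγ/(C−1)) · (2 − Cγ/(C−1)) ·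 Δℛ. -/
/-!
Since the anchor and the positive carry the same noisy label `i`, the normalisation of `Ã`
divides by `a(i)` twice while `ℛ̃` weights by it only once, leaving `1 / a(i) = C`. Summing
over the noisy negative labels removes their corruption because the rows of `q` sum to one.
What remains weighs the clean pair `(u, u⁺)` by `C (q qᵀ)(u, u⁺)`, and writing symmetric noise
as `q = (1 - s) I + (s / C) J` gives `C q qᵀ = C (1 - s)² I + s (2 - s) J`: the identity
part produces `ℛ`, the constant part `Δℛ`.
-/

open Finset

theorem Finset.sum_comm_innermost {M β γ δ ε : Type*} [AddCommMonoid M] (s : Finset β)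
    (t : Finset γ) (u : Finset δ) (w : Finset ε) (f : β → γ → δ → ε → M) :
    ∑ x ∈ s, ∑ y ∈ t, ∑ z ∈ u, ∑ v ∈ w, f x y z v
      = ∑ y ∈ t, ∑ z ∈ u, ∑ v ∈ w, ∑ x ∈ s, f x y z v := by
  rw [sum_comm]
  refine sum_congr rfl fun y _ => ?_
  rw [sum_comm]
  exact sum_congr rfl fun z _ => sum_comm

theorem sum_sum_sum_ite_mul_add {α β : Type*} [Fintype α] [DecidableEq α] [Fintype β]
    (c d : ℝ) (W : α → α → β → ℝ) :
    ∑ u, ∑ u', ∑ v, (c * (if u = u' then 1 else 0) + d) * W u u' v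
      = c * ∑ u, ∑ v, W u u v + d * ∑ u, ∑ u', ∑ v, W u u' v := by
  simp [add_mul, sum_add_distrib, mul_sum]

section NoisyRisk

variable {α ι : Type*} [Fintype α] [Fintype ι] [DecidableEq ι]

theorem sum_pi_prod_eq_one {q : α → α → ℝ} (hrow : ∀ u, ∑ i, q u i = 1) (v : ι → α) :
    ∑ j : ι → α, ∏ k, q (v k) (j k) = 1 := by
  rw [← Fintype.prod_sum]
  simp [hrow]

theorem noisy_risk_eq_weighted_clean_risk {q : α → α → ℝ} (hrow : ∀ u, ∑ i, q u i = 1)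
    (π a : α → ℝ) (ha : ∀ i, a i ≠ 0) (A : α → α → (ι → α) → ℝ) :
    ∑ i, ∑ j : ι → α, a i * (∏ k, a (j k)) * ((a i * a i * ∏ k, a (j k))⁻¹ *
        ∑ u, ∑ up, ∑ v : ι → α,
          q u i * π u * (q up i * π up) * (∏ k, q (v k) (j k) * π (v k)) * A u up v)
      = ∑ u, ∑ up, ∑ v : ι → α,
          (∑ i, q u i * q up i / a i) * (π u * π up * (∏ k, π (v k)) * A u up v) := by
  have hcancel : ∀ i (j : ι → α) (S : ℝ),
      a i * (∏ k, a (j k)) * ((a i * a i * ∏ k, a (j k))⁻¹ * S) = S / a i := by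
    intro i j S
    have : ∏ k, a (j k) ≠ 0 := prod_ne_zero_iff.2 fun k _ => ha (j k)
    field_simp [ha i]
  have hinner : ∀ i u up (v : ι → α),
      ∑ j : ι → α, q u i * π u * (q up i * π up) * (∏ k, q (v k) (j k) * π (v k))
          * A u up v / a i
        = q u i * q up i / a i * (π u * π up * (∏ k, π (v k)) * A u up v) := by
    intro i u up v
    simp_rw [prod_mul_distrib]
    rw [← sum_div, ← sum_mul, ← mul_sum, ← sum_mul, sum_pi_prod_eq_one hrow]
    ring
  simp_rw [hcancel, sum_div]
  rw [sum_congr rfl fun i _ => sum_comm_innermost _ _ _ _ _, sum_comm_innermost]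
  simp_rw [hinner, sum_mul]

end NoisyRisk

section SymmetricNoise

variable {α : Type*} [Fintype α] [DecidableEq α]

/-- With probability `s` the label is redrawn uniformly among all `C` classes, so `q` is
`(1 - s) I + (s / C) J`; symmetric noise with rate `γ` is the case `s = C γ / (C - 1)`. -/
noncomputable def resampleNoise (s : ℝ) (u i : α) : ℝ :=
  (1 - s) * (if u = i then 1 else 0) + s / Fintype.card α

theorem eq_resampleNoise_of_symmetric {γ : ℝ} {q : α → α → ℝ} (hC : 2 ≤ Fintype.card α)
    (hq_diag : ∀ i, q i i = 1 - γ)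
    (hq_off : ∀ j i, j ≠ i → q j i = γ / ((Fintype.card α : ℝ) - 1)) :
    q = resampleNoise ((Fintype.card α : ℝ) * γ / ((Fintype.card α : ℝ) - 1)) := by
  have hC' : (2 : ℝ) ≤ Fintype.card α := by exact_mod_cast hC
  have hC1 : (Fintype.card α : ℝ) - 1 ≠ 0 := by linarith
  have hC0 : (Fintype.card α : ℝ) ≠ 0 := by linarith
  ext u i
  by_cases h : u = i
  · subst h
    simp only [resampleNoise, hq_diag, if_true]
    field_simp
    ring
  · simp only [resampleNoise, if_neg h, hq_off u i h]
    field_simp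
    ring

variable {s : ℝ}

theorem sum_resampleNoise_right [Nonempty α] (u : α) : ∑ i, resampleNoise s u i = 1 := by
  simp only [resampleNoise, mul_ite, mul_one, mul_zero, sum_add_distrib, sum_ite_eq, mem_univ,
    if_true, sum_const, card_univ, nsmul_eq_mul]
  field_simp
  ring

theorem sum_resampleNoise_left [Nonempty α] (i : α) : ∑ u, resampleNoise s u i = 1 := by
  simp only [resampleNoise, mul_ite, mul_one, mul_zero, sum_add_distrib, sum_ite_eq', mem_univ,
    if_true, sum_const, card_univ, nsmul_eq_mul]
  field_simp
  ring

theorem sum_resampleNoise_mul_resampleNoise [Nonempty α] (u u' : α) :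
    ∑ i, resampleNoise s u i * resampleNoise s u' i
      = (1 - s) ^ 2 * (if u = u' then 1 else 0) + s * (2 - s) / Fintype.card α := by
  simp only [resampleNoise, mul_ite, mul_one, mul_zero, mul_add, add_mul, ite_mul, zero_mul,
    sum_add_distrib, sum_ite_eq, mem_univ, if_true, sum_const, card_univ, nsmul_eq_mul]
  split_ifs <;> field_simp <;> ring

end SymmetricNoise

theorem noisy_risk_symmetric_noise_general
    (C K : ℕ) (hC : 2 ≤ C)
    (γ : ℝ)
    (π : Fin C → ℝ) (hπ : ∀ i, π i = 1 / (C : ℝ))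
    (q : Fin C → Fin C → ℝ)
    (hq_diag : ∀ i, q i i = 1 - γ)
    (hq_off : ∀ j i, j ≠ i → q j i = γ / ((C : ℝ) - 1))
    (a : Fin C → ℝ) (ha : ∀ i, a i = ∑ u, q u i * π u)
    (A : Fin C → Fin C → (Fin K → Fin C) → ℝ)
    (Atil : Fin C → Fin C → (Fin K → Fin C) → ℝ)
    (hAtil : ∀ (i ip : Fin C) (j : Fin K → Fin C),
      Atil i ip j = (a i * a ip * ∏ k, a (j k))⁻¹ *
        ∑ u, ∑ up, ∑ v : Fin K → Fin C,
          q u i * π u * (q up ip * π up) * (∏ k, q (v k) (j k) * π (v k)) * A u up v)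
    (R ΔR Rtil : ℝ)
    (hR : R = ∑ u, ∑ v : Fin K → Fin C, π u * (∏ k, π (v k)) * A u u v)
    (hΔR : ΔR = ∑ u, ∑ up, ∑ v : Fin K → Fin C,
      π u * π up * (∏ k, π (v k)) * A u up v)
    (hRtil : Rtil = ∑ i, ∑ j : Fin K → Fin C, a i * (∏ k, a (j k)) * Atil i i j) :
    Rtil = (1 - (C : ℝ) * γ / ((C : ℝ) - 1)) ^ 2 * R
      + ((C : ℝ) * γ / ((C : ℝ) - 1)) * (2 - (C : ℝ) * γ / ((C : ℝ) - 1)) * ΔR := by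
  set s := (C : ℝ) * γ / ((C : ℝ) - 1)
  have hC0 : (C : ℝ) ≠ 0 := by positivity
  have : Nonempty (Fin C) := ⟨⟨0, by omega⟩⟩
  obtain rfl : q = resampleNoise s := by
    simpa using eq_resampleNoise_of_symmetric (by simpa using hC) hq_diag (by simpa using hq_off)
  have ha_unif : ∀ i, a i = 1 / C := fun i => by
    simp only [ha, hπ, ← sum_mul, sum_resampleNoise_left, one_mul]
  have hweight : ∀ u u', ∑ i, resampleNoise s u i * resampleNoise s u' i / a i
      = C * (1 - s) ^ 2 * (if u = u' then 1 else 0) + s * (2 - s) := fun u u' => by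
    simp only [ha_unif, div_div_eq_mul_div, div_one, ← sum_mul,
      sum_resampleNoise_mul_resampleNoise, Fintype.card_fin]
    rw [add_mul, div_mul_cancel₀ _ hC0]
    ring
  rw [hRtil]
  simp_rw [hAtil]
  rw [noisy_risk_eq_weighted_clean_risk sum_resampleNoise_right π a
    (fun i => by simp [ha_unif, hC0]) A]
  simp_rw [hweight]
  have hdiag : C * ∑ u, ∑ v : Fin K → Fin C, π u * π u * (∏ k, π (v k)) * A u u v = R := by
    simp_rw [hR, mul_sum, hπ]
    field_simp
  rw [sum_sum_sum_ite_mul_add, ← hΔR, ← hdiag]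
  ring

/-- Theorem 1 (risk consistency under symmetric label noise): under uniform class
priors and symmetric noise with rate γ, the noisy contrastive risk is a linear
combination of the clean risk and the additional risk. -/
theorem noisy_risk_symmetric_noise
    (C K : ℕ) (hC : 2 ≤ C) (hK : 1 ≤ K)
    (γ : ℝ) (hγ : γ ∈ Set.Ioo (0 : ℝ) 1)
    (π : Fin C → ℝ) (hπ : ∀ i, π i = 1 / (C : ℝ))
    (q : Fin C → Fin C → ℝ)
    (hq_diag : ∀ i, q i i = 1 - γ)
    (hq_off : ∀ j i, j ≠ i → q j i = γ / ((C : ℝ) - 1))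
    (a : Fin C → ℝ) (ha : ∀ i, a i = ∑ u, q u i * π u)
    (A : Fin C → Fin C → (Fin K → Fin C) → ℝ)
    (Atil : Fin C → Fin C → (Fin K → Fin C) → ℝ)
    (hAtil : ∀ (i ip : Fin C) (j : Fin K → Fin C),
      Atil i ip j = (a i * a ip * ∏ k, a (j k))⁻¹ *
        ∑ u, ∑ up, ∑ v : Fin K → Fin C,
          q u i * π u * (q up ip * π up) * (∏ k, q (v k) (j k) * π (v k)) * A u up v)
    (R ΔR Rtil : ℝ)
    (hR : R = ∑ u, ∑ v : Fin K → Fin C, π u * (∏ k, π (v k)) * A u u v)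
    (hΔR : ΔR = ∑ u, ∑ up, ∑ v : Fin K → Fin C,
      π u * π up * (∏ k, π (v k)) * A u up v)
    (hRtil : Rtil = ∑ i, ∑ j : Fin K → Fin C, a i * (∏ k, a (j k)) * Atil i i j) :
    Rtil = (1 - (C : ℝ) * γ / ((C : ℝ) - 1)) ^ 2 * R
      + ((C : ℝ) * γ / ((C : ℝ) - 1)) * (2 - (C : ℝ) * γ / ((C : ℝ) - 1)) * ΔR :=
  noisy_risk_symmetric_noise_general C K hC γ π hπ q hq_diag hq_off a ha A Atil hAtil R ΔR Rtil hR
    hΔR hRtil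
end

section
/- Let C ≥ 2, K ≥ 1, let π be the uniform probability vector on Fin C, let γ ∈ (0,1) with γ < (C−1)/C, and let q be the symmetric-noise corruption matrix with rate γ. Let F be a nonempty set (of representation functions) and A : F → Fin C × Fin C × (Fin K → Fin C) → ℝ arbitrary; for f ∈ F define ℛ(f) := ∑_{u, v} π_u (∏_k π_{v_k}) A(f)(u, u, v), Δℛ(f) := ∑_{u, u⁺, v} π_u π_{u⁺} (∏_k π_{v_k}) A(f)(u, u⁺, v), and ℛ̃(f) := (1 − Cγ/(C−1))² ℛ(f) + (Cγ/(C−1))(2 − Cγ/(C−1)) Δℛ(f). Assume there exists a constant A₀ ∈ ℝ with Δℛ(f) = A₀ for every f ∈ F. Then the loss is noise tolerant: if f* ∈ F satisfies ℛ̃(f*) ≤ ℛ̃(f) for all f ∈ F, then ℛ(f*) ≤ ℛ(f) for all f ∈ F. -/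
/-- Theorem 2 (noise tolerance under symmetric label noise): if the additional risk
Δℛ is constant over representation functions and γ < (C−1)/C, then any minimizer of
the noisy risk is a minimizer of the clean risk. -/
theorem noise_tolerance_symmetric
    (C K : ℕ) (hC : 2 ≤ C) (hK : 1 ≤ K)
    (γ : ℝ) (hγ : γ ∈ Set.Ioo (0 : ℝ) 1) (hγ' : γ < ((C : ℝ) - 1) / (C : ℝ))
    (π : Fin C → ℝ) (hπ : ∀ i, π i = 1 / (C : ℝ))
    (q : Fin C → Fin C → ℝ)
    (hq_diag : ∀ i, q i i = 1 - γ)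
    (hq_off : ∀ j i, j ≠ i → q j i = γ / ((C : ℝ) - 1))
    {F : Type*} [Nonempty F]
    (A : F → Fin C → Fin C → (Fin K → Fin C) → ℝ)
    (R ΔR Rtil : F → ℝ)
    (hR : ∀ f, R f = ∑ u, ∑ v : Fin K → Fin C, π u * (∏ k, π (v k)) * A f u u v)
    (hΔR : ∀ f, ΔR f = ∑ u, ∑ up, ∑ v : Fin K → Fin C,
      π u * π up * (∏ k, π (v k)) * A f u up v)
    (hRtil : ∀ f, Rtil f = (1 - (C : ℝ) * γ / ((C : ℝ) - 1)) ^ 2 * R f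
      + ((C : ℝ) * γ / ((C : ℝ) - 1)) * (2 - (C : ℝ) * γ / ((C : ℝ) - 1)) * ΔR f)
    (A₀ : ℝ) (hconst : ∀ f, ΔR f = A₀)
    (fstar : F) (hmin : ∀ f, Rtil fstar ≤ Rtil f) :
    ∀ f, R fstar ≤ R f := by
  intro f
  have hCpos : (0:ℝ) < (C:ℝ) := by positivity
  have hC1 : (0:ℝ) < (C:ℝ) - 1 := by
    have : (2:ℝ) ≤ (C:ℝ) := by exact_mod_cast hC
    linarith
  have hc : (C:ℝ) * γ / ((C:ℝ) - 1) < 1 := by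
    rw [div_lt_one hC1]
    have := (lt_div_iff₀ hCpos).mp hγ'
    linarith
  have hcpos : (0:ℝ) < (1 - (C:ℝ) * γ / ((C:ℝ) - 1)) ^ 2 := by
    have : (0:ℝ) < 1 - (C:ℝ) * γ / ((C:ℝ) - 1) := by linarith
    positivity
  have h := hmin f
  rw [hRtil, hRtil, hconst, hconst] at h
  nlinarith
end

section
/- Let C ≥ 2, K ≥ 1, let π be the uniform probability vector on Fin C, and let q be a doubly stochastic label-corruption matrix: q_u(i) ≥ 0, ∑_{i} q_u(i) = 1 for every u, and ∑_{u} q_u(i) = 1 for every i (so that a(i) := ∑_u q_u(i) π_u = 1/C for all i). Suppose there exist constants c₁, c₂ ∈ ℝ such that ∑_{i=1}^C q_u(i)² = c₁ for every u and ∑_{i=1}^C q_u(i) q_{u⁺}(i) = c₂ for every u ≠ u⁺. Let A : Fin C × Fin C × (Fin K → Fin C) → ℝ be arbitrary and define ℛ := ∑_{u, v} π_u (∏_k π_{v_k}) A(u, u, v), Δℛ := ∑_{u, u⁺, v} π_u π_{u⁺} (∏_k π_{v_k}) A(u, u⁺, v), and the noisy risk ℛ̃ := ∑_{i, j} a(i)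 (∏_k a(j_k)) Ã(i, i, j) with Ã(i, i⁺, j) := (a(i) a(i⁺) ∏_k a(j_k))⁻¹ ∑_{u, u⁺, v} q_u(i) π_u · q_{u⁺}(i⁺) π_{u⁺} · (∏_k q_{v_k}(j_k) π_{v_k}) · A(u, u⁺, v). Then ℛ̃ = (c₁ − c₂) · ℛ + C · c₂ · Δℛ. -/
/-- Theorem 6 (risk consistency under asymmetric label noise): with uniform priors and
a doubly stochastic corruption matrix whose rows have common squared norm c₁ and common
pairwise inner product c₂, the noisy risk equals (c₁ − c₂)·ℛ + C·c₂·Δℛ. -/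
theorem noisy_risk_asymmetric_noise
    (C K : ℕ) (hC : 2 ≤ C) (hK : 1 ≤ K)
    (π : Fin C → ℝ) (hπ : ∀ i, π i = 1 / (C : ℝ))
    (q : Fin C → Fin C → ℝ)
    (hq_nonneg : ∀ u i, 0 ≤ q u i)
    (hq_row : ∀ u, ∑ i, q u i = 1)
    (hq_col : ∀ i, ∑ u, q u i = 1)
    (a : Fin C → ℝ) (ha : ∀ i, a i = ∑ u, q u i * π u)
    (c₁ c₂ : ℝ)
    (hc₁ : ∀ u, ∑ i, q u i ^ 2 = c₁)
    (hc₂ : ∀ u up, u ≠ up → ∑ i, q u i * q up i = c₂)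
    (A : Fin C → Fin C → (Fin K → Fin C) → ℝ)
    (Atil : Fin C → Fin C → (Fin K → Fin C) → ℝ)
    (hAtil : ∀ (i ip : Fin C) (j : Fin K → Fin C),
      Atil i ip j = (a i * a ip * ∏ k, a (j k))⁻¹ *
        ∑ u, ∑ up, ∑ v : Fin K → Fin C,
          q u i * π u * (q up ip * π up) * (∏ k, q (v k) (j k) * π (v k)) * A u up v)
    (R ΔR Rtil : ℝ)
    (hR : R = ∑ u, ∑ v : Fin K → Fin C, π u * (∏ k, π (v k)) * A u u v)
    (hΔR : ΔR = ∑ u, ∑ up, ∑ v : Fin K → Fin C,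
      π u * π up * (∏ k, π (v k)) * A u up v)
    (hRtil : Rtil = ∑ i, ∑ j : Fin K → Fin C, a i * (∏ k, a (j k)) * Atil i i j) :
    Rtil = (c₁ - c₂) * R + (C : ℝ) * c₂ * ΔR := by
  have hC0 : (C : ℝ) ≠ 0 := Nat.cast_ne_zero.2 (by omega)
  have haC : ∀ i, a i = (C : ℝ)⁻¹ := by
    intro i
    rw [ha]
    simp only [hπ, one_div]
    rw [← Finset.sum_mul, hq_col, one_mul]
  -- pointwise simplification of the noisy summand
  have key : ∀ (i : Fin C) (j : Fin K → Fin C),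
      a i * (∏ k, a (j k)) * Atil i i j
        = (C : ℝ) * ∑ u, ∑ up, ∑ v : Fin K → Fin C,
            q u i * π u * (q up i * π up) * (∏ k, q (v k) (j k) * π (v k)) * A u up v := by
    intro i j
    rw [hAtil]
    simp only [haC, Finset.prod_const, Finset.card_univ, Fintype.card_fin]
    rw [← mul_assoc]
    congr 1
    field_simp
  -- swap a sum over an index to the innermost position of a triple sum
  have comm3 : ∀ {α : Type} [Fintype α] (f : α → Fin C → Fin C → (Fin K → Fin C) → ℝ),
      ∑ x : α, ∑ u, ∑ up, ∑ v : Fin K → Fin C, f x u up v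
        = ∑ u, ∑ up, ∑ v : Fin K → Fin C, ∑ x : α, f x u up v := by
    intro α _ f
    rw [Finset.sum_comm]
    refine Finset.sum_congr rfl fun u _ => ?_
    rw [Finset.sum_comm]
    exact Finset.sum_congr rfl fun up _ => Finset.sum_comm
  have hjsum : ∀ v : Fin K → Fin C,
      ∑ j : Fin K → Fin C, ∏ k, q (v k) (j k) * π (v k) = ∏ k, π (v k) := by
    intro v
    rw [← Fintype.prod_sum (fun k t => q (v k) t * π (v k))]
    exact Finset.prod_congr rfl fun k _ => by rw [← Finset.sum_mul, hq_row, one_mul]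
  have hin : ∀ u up, ∑ i, q u i * q up i = if u = up then c₁ else c₂ := by
    intro u up
    by_cases h : u = up
    · subst h
      rw [if_pos rfl, ← hc₁ u]
      exact Finset.sum_congr rfl fun i _ => (sq (q u i)).symm
    · rw [if_neg h, hc₂ u up h]
  rw [hRtil]
  simp only [key, ← Finset.mul_sum]
  -- perform the j-summation inside, for each i
  have step1 : ∀ i : Fin C,
      ∑ j : Fin K → Fin C, ∑ u, ∑ up, ∑ v : Fin K → Fin C,
          q u i * π u * (q up i * π up) * (∏ k, q (v k) (j k) * π (v k)) * A u up v
        = ∑ u, ∑ up, ∑ v : Fin K → Fin C,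
            q u i * π u * (q up i * π up) * (∏ k, π (v k)) * A u up v := by
    intro i
    rw [comm3]
    refine Finset.sum_congr rfl fun u _ => Finset.sum_congr rfl fun up _ =>
      Finset.sum_congr rfl fun v _ => ?_
    rw [← Finset.sum_mul, ← Finset.mul_sum, hjsum v]
  simp only [step1]
  -- perform the i-summation
  rw [comm3 (fun i u up v => q u i * π u * (q up i * π up) * (∏ k, π (v k)) * A u up v)]
  have step2 : ∀ u up (v : Fin K → Fin C),
      ∑ i, q u i * π u * (q up i * π up) * (∏ k, π (v k)) * A u up v
        = (if u = up then c₁ else c₂) * (π u * π up * (∏ k, π (v k)) * A u up v) := by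
    intro u up v
    rw [← hin u up, Finset.sum_mul]
    exact Finset.sum_congr rfl fun i _ => by ring
  simp only [step2]
  have split : ∀ (u up : Fin C) (x : ℝ),
      (if u = up then c₁ else c₂) * x = c₂ * x + (if u = up then (c₁ - c₂) * x else 0) := by
    intro u up x
    by_cases h : u = up <;> simp [h] <;> ring
  simp only [split, Finset.sum_add_distrib]
  have pull : ∀ u : Fin C,
      ∑ up, ∑ v : Fin K → Fin C,
          (if u = up then (c₁ - c₂) * (π u * π up * (∏ k, π (v k)) * A u up v) else 0)
        = (c₁ - c₂) * ∑ v : Fin K → Fin C, π u * π u * (∏ k, π (v k)) * A u u v := by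
    intro u
    simp only [Finset.sum_ite_irrel, Finset.sum_const_zero, Finset.sum_ite_eq,
      Finset.mem_univ, if_true, Finset.mul_sum]
  simp only [pull]
  rw [hR, hΔR]
  simp only [hπ, Finset.prod_const, Finset.card_univ, Fintype.card_fin, one_div, ← mul_assoc,
    ← Finset.mul_sum]
  field_simp
  ring
end

section
/- Let C ≥ 2, K ≥ 1, let π be the uniform probability vector on Fin C, and let q be a doubly stochastic label-corruption matrix satisfying, for some constants c₁, c₂ ∈ ℝ: ∑_{i} q_u(i)² = c₁ for all u and ∑_{i} q_u(i) q_{u⁺}(i) = c₂ for all u ≠ u⁺. Assume moreover the diagonal-dominance condition: q_u(u) > q_i(u) for every u and every i ≠ u (i.e. 1 − γ_u > γ_{ui} in the notation q_u(u) = 1 − γ_u, q_i(u) = γ_{ui}). Let F be a nonempty set, A : F → Fin C × Fin C × (Fin K → Fin C) → ℝ arbitrary, and for f ∈ F define ℛ(f), Δℛ(f), ℛ̃(f) from A(f) via ℛ(f) := ∑_{u, v} π_u (∏_k π_{v_k}) A(f)(u, u, v), Δℛ(f) := ∑_{u, u⁺, v} π_u π_{u⁺} (∏_k π_{v_k}) A(f)(u,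 u⁺, v), ℛ̃(f) := (c₁ − c₂) ℛ(f) + C c₂ Δℛ(f). Assume there exists A₀ ∈ ℝ with Δℛ(f) = A₀ for all f ∈ F. Then if f* ∈ F satisfies ℛ̃(f*) ≤ ℛ̃(f) for all f ∈ F, it also satisfies ℛ(f*) ≤ ℛ(f) for all f ∈ F. -/
/-- Theorem 7 (noise tolerance under asymmetric label noise): under uniform priors,
a doubly stochastic corruption matrix with row norms c₁ and pairwise inner products c₂,
diagonal dominance q_u(u) > q_i(u) for i ≠ u, and a constant additional risk, any
minimizer of the noisy risk is a minimizer of the clean risk. -/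
theorem noise_tolerance_asymmetric
    (C K : ℕ) (hC : 2 ≤ C) (hK : 1 ≤ K)
    (π : Fin C → ℝ) (hπ : ∀ i, π i = 1 / (C : ℝ))
    (q : Fin C → Fin C → ℝ)
    (hq_nonneg : ∀ u i, 0 ≤ q u i)
    (hq_row : ∀ u, ∑ i, q u i = 1)
    (hq_col : ∀ i, ∑ u, q u i = 1)
    (c₁ c₂ : ℝ)
    (hc₁ : ∀ u, ∑ i, q u i ^ 2 = c₁)
    (hc₂ : ∀ u up, u ≠ up → ∑ i, q u i * q up i = c₂)
    (hdom : ∀ u i, i ≠ u → q i u < q u u)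
    {F : Type*} [Nonempty F]
    (A : F → Fin C → Fin C → (Fin K → Fin C) → ℝ)
    (R ΔR Rtil : F → ℝ)
    (hR : ∀ f, R f = ∑ u, ∑ v : Fin K → Fin C, π u * (∏ k, π (v k)) * A f u u v)
    (hΔR : ∀ f, ΔR f = ∑ u, ∑ up, ∑ v : Fin K → Fin C,
      π u * π up * (∏ k, π (v k)) * A f u up v)
    (hRtil : ∀ f, Rtil f = (c₁ - c₂) * R f + (C : ℝ) * c₂ * ΔR f)
    (A₀ : ℝ) (hconst : ∀ f, ΔR f = A₀)
    (fstar : F) (hmin : ∀ f, Rtil fstar ≤ Rtil f) :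
    ∀ f, R fstar ≤ R f := by
  have h2 : 1 < C := lt_of_lt_of_le one_lt_two hC
  set u : Fin C := ⟨0, by omega⟩
  set up : Fin C := ⟨1, by omega⟩
  have hne : u ≠ up := by simp [u, up, Fin.ext_iff]
  have hsq : 0 < ∑ i, (q u i - q up i) ^ 2 := by
    apply Finset.sum_pos' (fun i _ => sq_nonneg _)
    refine ⟨u, Finset.mem_univ _, ?_⟩
    have h := hdom u up hne.symm
    nlinarith
  have hexp : ∑ i, (q u i - q up i) ^ 2 = 2 * c₁ - 2 * c₂ := by
    have h1 := hc₁ u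
    have h2 := hc₁ up
    have h3 := hc₂ u up hne
    have he : ∀ i, (q u i - q up i) ^ 2
        = (q u i ^ 2 + q up i ^ 2) - 2 * (q u i * q up i) := fun i => by ring
    rw [Finset.sum_congr rfl fun i _ => he i, Finset.sum_sub_distrib,
      Finset.sum_add_distrib, ← Finset.mul_sum, h1, h2, h3]
    ring
  have hpos : 0 < c₁ - c₂ := by linarith [hexp ▸ hsq]
  intro f
  have := hmin f
  rw [hRtil, hRtil, hconst, hconst] at this
  nlinarith
end

section
/- Let (X, 𝔄) be a measurable space, μ a probability measure on X, and g : X → ℝ a bounded measurable function. Then lim_{M → ∞} ∫_{X^M} log( (1/M) ∑_{m=1}^M exp(g(x_m)) ) dμ^{⊗M}(x_1, …, x_M) = log ∫_X exp(g(x)) dμ(x). -/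
/-!
Realise the samples of every size `M` as the first `M` coordinates of a single i.i.d. sequence
`ω ~ μ^⊗ℕ`. By the strong law of large numbers the empirical means of `exp ∘ g` converge almost
surely to `∫ exp ∘ g dμ > 0`, hence so do their logarithms to its logarithm, and since
`|g| ≤ B` these logarithms are bounded by `B`, so dominated convergence applies.
-/

open MeasureTheory Filter ProbabilityTheory Finset

theorem measurePreserving_infinitePi_comp_embedding {ι ι' X : Type*} [Fintype ι']
    [MeasurableSpace X] (μ : Measure X) [IsProbabilityMeasure μ] (e : ι' ↪ ι) :
    MeasurePreserving (fun (ω : ι → X) (i : ι') => ω (e i))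
      (Measure.infinitePi fun _ => μ) (Measure.pi fun _ => μ) where
  measurable := by fun_prop
  map_eq := by
    refine (Measure.pi_eq fun s hs => ?_).symm
    have hpre : (fun (ω : ι → X) (i : ι') => ω (e i)) ⁻¹' Set.univ.pi s =
        (↑(univ.map e) : Set ι).pi (Function.extend e s fun _ => Set.univ) := by
      ext ω
      simp [e.injective.extend_apply]
    rw [Measure.map_apply (by fun_prop) (.univ_pi hs), hpre, Measure.infinitePi_pi, prod_map]
    · simp [e.injective.extend_apply]
    · intro i hi
      obtain ⟨j, -, rfl⟩ := mem_map.1 hi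
      simpa [e.injective.extend_apply] using hs j

theorem integral_pi_fin_eq_integral_infinitePi {X E : Type*} [MeasurableSpace X]
    [NormedAddCommGroup E] [NormedSpace ℝ E] (μ : Measure X) [IsProbabilityMeasure μ] {M : ℕ}
    {F : (Fin M → X) → E} (hF : AEStronglyMeasurable F (Measure.pi fun _ => μ)) :
    ∫ x, F x ∂(Measure.pi fun _ => μ) =
      ∫ ω, F (fun i => ω i) ∂(Measure.infinitePi fun _ : ℕ => μ) := by
  have hM := measurePreserving_infinitePi_comp_embedding μ (Fin.valEmbedding (n := M))
  rw [← hM.map_eq, integral_map hM.measurable.aemeasurable (hM.map_eq ▸ hF)]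
  rfl

theorem strong_law_infinitePi {X : Type*} [MeasurableSpace X] (μ : Measure X)
    [IsProbabilityMeasure μ] {f : X → ℝ} (hf : Measurable f) (hfi : Integrable f μ) :
    ∀ᵐ ω ∂Measure.infinitePi (fun _ : ℕ => μ),
      Tendsto (fun n : ℕ => (∑ i ∈ range n, f (ω i)) / n) atTop (nhds (∫ x, f x ∂μ)) := by
  have heval : ∀ i, MeasurePreserving (fun ω : ℕ → X => ω i)
      (Measure.infinitePi fun _ => μ) μ := measurePreserving_eval_infinitePi _
  have hindep : iIndepFun (fun i (ω : ℕ → X) => f (ω i)) (Measure.infinitePi fun _ => μ) :=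
    iIndepFun_infinitePi (P := fun _ => μ) (X := fun _ => f) fun _ => hf
  have hident : ∀ i, IdentDistrib (fun ω : ℕ → X => f (ω i)) (fun ω => f (ω 0))
      (Measure.infinitePi fun _ => μ) (Measure.infinitePi fun _ => μ) := fun i =>
    IdentDistrib.comp ⟨(heval i).measurable.aemeasurable,
      (heval 0).measurable.aemeasurable, by rw [(heval i).map_eq, (heval 0).map_eq]⟩ hf
  have hmean : ∫ ω, f (ω 0) ∂Measure.infinitePi (fun _ : ℕ => μ) = ∫ x, f x ∂μ := by
    rw [← integral_map (heval 0).measurable.aemeasurable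
      ((heval 0).map_eq ▸ hf.aestronglyMeasurable), (heval 0).map_eq]
  rw [← hmean]
  exact strong_law_ae_real (fun i (ω : ℕ → X) => f (ω i))
    ((heval 0).integrable_comp_of_integrable hfi) (fun i j hij => hindep.indepFun hij) hident

theorem abs_log_le_of_mem_Icc_exp {a B : ℝ} (ha : a ∈ Set.Icc (Real.exp (-B)) (Real.exp B)) :
    |Real.log a| ≤ B := by
  have ha₀ : 0 < a := (Real.exp_pos _).trans_le ha.1
  rw [abs_le, Real.le_log_iff_exp_le ha₀, Real.log_le_iff_le_exp ha₀]
  exact ha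

theorem one_div_card_mul_sum_mem_Icc {ι : Type*} {s : Finset ι} (hs : s.Nonempty) {y : ι → ℝ}
    {a b : ℝ} (hy : ∀ i ∈ s, y i ∈ Set.Icc a b) :
    (1 / (#s : ℝ)) * ∑ i ∈ s, y i ∈ Set.Icc a b := by
  have hcard : (0 : ℝ) < #s := by exact_mod_cast hs.card_pos
  rw [one_div_mul_eq_div, Set.mem_Icc, le_div_iff₀ hcard, div_le_iff₀ hcard, mul_comm a,
    mul_comm b]
  constructor
  · simpa using card_nsmul_le_sum s y a fun i hi => (hy i hi).1
  · simpa using sum_le_card_nsmul s y b fun i hi => (hy i hi).2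

/-- Law-of-large-numbers limit: for bounded measurable g, the expectation of
log of the empirical average of exp(g) over M i.i.d. samples converges, as M → ∞,
to log of the expectation of exp(g). -/
theorem log_mean_exp_tendsto
    {X : Type*} [MeasurableSpace X] (μ : Measure X) [IsProbabilityMeasure μ]
    (g : X → ℝ) (hg : Measurable g) (B : ℝ) (hB : ∀ x, |g x| ≤ B) :
    Tendsto (fun M : ℕ =>
        ∫ x : Fin M → X,
          Real.log ((1 / (M : ℝ)) * ∑ m, Real.exp (g (x m)))
          ∂(Measure.pi fun _ : Fin M => μ))
      atTop (nhds (Real.log (∫ x, Real.exp (g x) ∂μ))) := by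
  set F : ℕ → (ℕ → X) → ℝ := fun M ω =>
    Real.log ((1 / (M : ℝ)) * ∑ m ∈ range M, Real.exp (g (ω m)))
  have hF : ∀ M, ∫ x : Fin M → X, Real.log ((1 / (M : ℝ)) * ∑ m, Real.exp (g (x m)))
      ∂(Measure.pi fun _ => μ) = ∫ ω, F M ω ∂(Measure.infinitePi fun _ => μ) := fun M => by
    rw [integral_pi_fin_eq_integral_infinitePi μ (Measurable.aestronglyMeasurable (by fun_prop))]
    simp only [F, fun ω : ℕ → X => Fin.sum_univ_eq_sum_range (fun m => Real.exp (g (ω m))) M]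
  have hexp_mem : ∀ x, Real.exp (g x) ∈ Set.Icc (Real.exp (-B)) (Real.exp B) := fun x =>
    ⟨Real.exp_le_exp.2 (neg_le_of_abs_le (hB x)), Real.exp_le_exp.2 (le_of_abs_le (hB x))⟩
  have hexp_int : Integrable (fun x => Real.exp (g x)) μ :=
    .of_bound (by fun_prop) (Real.exp B) (.of_forall fun x => by
      simpa [abs_of_pos (Real.exp_pos _)] using (hexp_mem x).2)
  have hF_bound : ∀ M ≥ 1, ∀ ω, |F M ω| ≤ B := fun M hM ω => abs_log_le_of_mem_Icc_exp <| by
    simpa using one_div_card_mul_sum_mem_Icc (nonempty_range_iff.2 (by omega))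
      fun m _ => hexp_mem (ω m)
  have hF_lim : ∀ᵐ ω ∂Measure.infinitePi fun _ => μ,
      Tendsto (F · ω) atTop (nhds (Real.log (∫ x, Real.exp (g x) ∂μ))) := by
    filter_upwards [strong_law_infinitePi μ (by fun_prop) hexp_int] with ω hω
    simp_rw [F, one_div_mul_eq_div]
    exact hω.log (integral_exp_pos hexp_int).ne'
  simp_rw [hF]
  simpa using tendsto_integral_filter_of_dominated_convergence (fun _ => B)
    (.of_forall fun M => (Measurable.aestronglyMeasurable (by fun_prop)))
    ((eventually_ge_atTop 1).mono fun M hM => .of_forall (hF_bound M hM))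
    (integrable_const B) hF_lim
end

section
/- Let (X, 𝔄) be a measurable space, μ a probability measure on X, d ≥ 1, and f : X → ℝ^d a bounded measurable map. For M, K ≥ 1 define the expected reverse-InfoNCE (RevNCE) additional risk J_{M,K} := ∫_{X^{M+K+1}} (1/K) ∑_{k=1}^K − log( ( (1/M) ∑_{m=1}^M exp(⟨f(x), f(x⁺_m)⟩) ) / exp(⟨f(x), f(x⁻_k)⟩) ) dμ^{⊗(M+K+1)}(x, x⁺_1, …, x⁺_M, x⁻_1, …, x⁻_K). Then for every K ≥ 1, lim_{M → ∞} J_{M,K} = ∫_X ∫_X ⟨f(x), f(x')⟩ dμ(x') dμ(x) − ∫_X log( ∫_X exp(⟨f(x), f(x')⟩) dμ(x') ) dμ(x); in particular this limit equals the negative of lim_{K' → ∞} (I_{K'} − log K'), the limit additional risk of InfoNCE. -/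
/-!
Write `s x y = ⟨f x, f y⟩`, so `|s| ≤ B²`. Pointwise, the RevNCE loss is the mean of the negative
scores `s x x⁻ₖ` minus `log` of the empirical mean of `exp (s x x⁺ₘ)`, and `I_K - log K` is
`log (exp (s x x⁺) / K + (1/K) ∑ₖ exp (s x x⁻ₖ))` minus `s x x⁺`. The score terms integrate to
`∫∫ s` exactly. For the logarithmic terms, `log` is `e^{B²}`-Lipschitz on `[e^{-B²}, ∞)` and an
empirical mean of `n` i.i.d. samples is within `√(Var / n)` of its expectation in `L¹`, so for
fixed anchor the expected `log` converges to `log ∫ exp (s x ·) dμ`; bounded convergence in the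
remaining variables gives both limits.
-/

open MeasureTheory Filter ProbabilityTheory Real Topology Function

theorem one_div_mul_sum_mem_Icc {n : ℕ} (hn : n ≠ 0) {x : Fin n → ℝ} {a b : ℝ}
    (hx : ∀ i, x i ∈ Set.Icc a b) : (1 / (n : ℝ)) * ∑ i, x i ∈ Set.Icc a b := by
  have hne : (Finset.univ : Finset (Fin n)).Nonempty := Finset.univ_nonempty_iff.2 ⟨⟨0, by omega⟩⟩
  have hmean : (1 / (n : ℝ)) * ∑ i, x i = Finset.univ.expect x := by
    rw [Finset.expect_eq_sum_div_card, Finset.card_univ, Fintype.card_fin]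
    ring
  rw [hmean]
  exact ⟨Finset.le_expect hne fun i _ => (hx i).1, Finset.expect_le hne fun i _ => (hx i).2⟩

theorem exp_mem_Icc_of_abs_le {a b : ℝ} (h : |a| ≤ b) : exp a ∈ Set.Icc (exp (-b)) (exp b) :=
  ⟨exp_le_exp.2 (neg_le_of_abs_le h), exp_le_exp.2 (le_of_abs_le h)⟩

theorem abs_log_le_of_mem_Icc_exp_s11 {u b : ℝ} (hu : u ∈ Set.Icc (exp (-b)) (exp b)) :
    |log u| ≤ b := by
  have hu0 : 0 < u := (exp_pos _).trans_le hu.1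
  exact abs_le.2 ⟨(le_log_iff_exp_le hu0).2 hu.1, (log_le_iff_le_exp hu0).2 hu.2⟩

theorem Real.abs_log_sub_log_le {ε a b : ℝ} (hε : 0 < ε) (ha : ε ≤ a) (hb : ε ≤ b) :
    |log a - log b| ≤ |a - b| / ε := by
  wlog hab : b ≤ a generalizing a b
  · rw [abs_sub_comm, abs_sub_comm a]
    exact this hb ha (le_of_not_ge hab)
  have hb0 : 0 < b := hε.trans_le hb
  rw [abs_of_nonneg (sub_nonneg.2 (log_le_log hb0 hab)), abs_of_nonneg (sub_nonneg.2 hab),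
    ← log_div (hb0.trans_le hab).ne' hb0.ne']
  calc log (a / b) ≤ a / b - 1 := log_le_sub_one_of_pos (div_pos (hb0.trans_le hab) hb0)
    _ = (a - b) / b := by field_simp
    _ ≤ (a - b) / ε := div_le_div_of_nonneg_left (sub_nonneg.2 hab) hε hb

theorem integral_abs_sub_integral_le_sqrt_variance {Ω : Type*} [MeasurableSpace Ω]
    {μ : Measure Ω} [IsProbabilityMeasure μ] {Z : Ω → ℝ} (hZ : MemLp Z 2 μ) :
    ∫ ω, |Z ω - μ[Z]| ∂μ ≤ √(Var[Z; μ]) := by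
  have hW : MemLp (fun ω => |Z ω - μ[Z]|) 2 μ := (hZ.sub (memLp_const _)).abs
  have hvar := variance_nonneg (fun ω => |Z ω - μ[Z]|) μ
  rw [variance_eq_sub hW] at hvar
  have hsq : μ[(fun ω => |Z ω - μ[Z]|) ^ 2] = Var[Z; μ] := by
    rw [variance_eq_integral hZ.aemeasurable]
    simp only [Pi.pow_apply, sq_abs]
  exact (le_abs_self _).trans (Real.abs_le_sqrt (by linarith))

section SampleMean

variable {α : Type*} [MeasurableSpace α] {ν : Measure α} [IsProbabilityMeasure ν]

theorem integral_abs_sampleMean_sub_le_sqrt {h : α → ℝ} (hh : MemLp h 2 ν) {n : ℕ} (hn : n ≠ 0) :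
    ∫ y, |(1 / (n : ℝ)) * ∑ i, h (y i) - ∫ a, h a ∂ν| ∂(Measure.pi fun _ : Fin n => ν)
      ≤ √(Var[h; ν] / n) := by
  have hcoord : ∀ i : Fin n, MemLp (fun y : Fin n → α => h (y i)) 2 (Measure.pi fun _ => ν) :=
    fun i => hh.comp_measurePreserving (measurePreserving_eval _ i)
  have hmean : ∫ y, (1 / (n : ℝ)) * ∑ i, h (y i) ∂(Measure.pi fun _ : Fin n => ν)
      = ∫ a, h a ∂ν := by
    rw [integral_const_mul, integral_finsetSum _ fun i _ => (hcoord i).integrable one_le_two]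
    simp only [integral_comp_eval (μ := fun _ : Fin n => ν) hh.aestronglyMeasurable,
      Finset.sum_const, Finset.card_univ, Fintype.card_fin, nsmul_eq_mul]
    field_simp
  have hvar : Var[fun y : Fin n → α => (1 / (n : ℝ)) * ∑ i, h (y i); Measure.pi fun _ => ν]
      = Var[h; ν] / n := by
    have hsum := variance_sum_pi (μ := fun _ : Fin n => ν) (X := fun _ => h) (fun _ => hh)
    have hsmul := variance_smul (1 / (n : ℝ)) (∑ i : Fin n, fun y : Fin n → α => h (y i))
      (Measure.pi fun _ => ν)
    simp only [hsum, Finset.sum_const, Finset.card_univ, Fintype.card_fin, nsmul_eq_mul] at hsmul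
    convert hsmul using 1
    · congr 1
      ext y
      simp [Finset.sum_apply]
    · field_simp
  have hZ : MemLp (fun y : Fin n → α => (1 / (n : ℝ)) * ∑ i, h (y i)) 2
      (Measure.pi fun _ => ν) :=
    (memLp_finsetSum _ fun i _ => hcoord i).const_mul _
  simpa only [hmean, hvar] using integral_abs_sub_integral_le_sqrt_variance hZ

theorem abs_integral_log_add_sampleMean_sub_log_le {g : α → ℝ} (hg_meas : Measurable g) {ε C : ℝ}
    (hε : 0 < ε) (hg : ∀ a, g a ∈ Set.Icc ε C) {c : ℝ} (hc : 0 ≤ c) {n : ℕ} (hn : n ≠ 0) :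
    |∫ y, log (c + (1 / (n : ℝ)) * ∑ i, g (y i)) ∂(Measure.pi fun _ : Fin n => ν)
        - log (∫ a, g a ∂ν)| ≤ (c + √(Var[g; ν] / n)) / ε := by
  set P := Measure.pi fun _ : Fin n => ν
  set avg := fun y : Fin n → α => (1 / (n : ℝ)) * ∑ i, g (y i)
  set m := ∫ a, g a ∂ν
  have hg2 : MemLp g 2 ν := memLp_of_bounded (ae_of_all _ hg) hg_meas.aestronglyMeasurable 2
  have hm : ε ≤ m := by
    simpa using integral_mono (integrable_const ε) (hg2.integrable one_le_two) fun a => (hg a).1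
  have havg : ∀ y, avg y ∈ Set.Icc ε C := fun y => one_div_mul_sum_mem_Icc hn fun i => hg (y i)
  have hlo : ∀ y, ε ≤ c + avg y := fun y => le_add_of_nonneg_of_le hc (havg y).1
  have havg_int : Integrable avg P :=
    Integrable.of_bound (by fun_prop : Measurable avg).aestronglyMeasurable (max |ε| |C|)
      (ae_of_all _ fun y => abs_le_max_abs_abs (havg y).1 (havg y).2)
  have hlog_int : Integrable (fun y => log (c + avg y)) P :=
    Integrable.of_bound (by fun_prop : Measurable _).aestronglyMeasurable
      (max |log ε| |log (c + C)|) (ae_of_all _ fun y => abs_le_max_abs_abs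
        (log_le_log hε (hlo y)) (log_le_log (hε.trans_le (hlo y)) (add_le_add_right (havg y).2 c)))
  have hdev_int : Integrable (fun y => |avg y - m|) P := (havg_int.sub (integrable_const _)).abs
  have hpt : ∀ y, |log (c + avg y) - log m| ≤ (c + |avg y - m|) / ε := fun y =>
    (abs_log_sub_log_le hε (hlo y) hm).trans <| by
      gcongr
      simpa only [add_sub_assoc, abs_of_nonneg hc] using abs_add_le c (avg y - m)
  calc |∫ y, log (c + avg y) ∂P - log m|
      = |∫ y, (log (c + avg y) - log m) ∂P| := by
        rw [integral_sub hlog_int (integrable_const _), integral_const, probReal_univ, one_smul]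
    _ ≤ ∫ y, |log (c + avg y) - log m| ∂P := abs_integral_le_integral_abs
    _ ≤ ∫ y, (c + |avg y - m|) / ε ∂P :=
        integral_mono (hlog_int.sub (integrable_const _)).abs
          (((integrable_const _).add hdev_int).div_const _) hpt
    _ = (c + ∫ y, |avg y - m| ∂P) / ε := by
        rw [integral_div, integral_add (integrable_const _) hdev_int, integral_const,
          probReal_univ, one_smul]
    _ ≤ (c + √(Var[g; ν] / n)) / ε := by
        gcongr
        exact integral_abs_sampleMean_sub_le_sqrt hg2 hn

theorem tendsto_integral_log_add_sampleMean {g : α → ℝ} (hg_meas : Measurable g) {ε C : ℝ}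
    (hε : 0 < ε) (hg : ∀ a, g a ∈ Set.Icc ε C) {c : ℕ → ℝ} (hc0 : ∀ n, 0 ≤ c n)
    (hc : Tendsto c atTop (𝓝 0)) :
    Tendsto (fun n : ℕ => ∫ y, log (c n + (1 / (n : ℝ)) * ∑ i, g (y i))
      ∂(Measure.pi fun _ : Fin n => ν)) atTop (𝓝 (log (∫ a, g a ∂ν))) := by
  have hbound : Tendsto (fun n : ℕ => (c n + √(Var[g; ν] / n)) / ε) atTop (𝓝 0) := by
    have hsqrt : Tendsto (fun n : ℕ => √(Var[g; ν] / n)) atTop (𝓝 0) := by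
      simpa using (tendsto_const_div_atTop_nhds_zero_nat (Var[g; ν])).sqrt
    simpa using (hc.add hsqrt).div_const ε
  rw [tendsto_iff_norm_sub_tendsto_zero]
  refine squeeze_zero' (Eventually.of_forall fun n => norm_nonneg _) ?_ hbound
  filter_upwards [eventually_ne_atTop 0] with n hn
  exact abs_integral_log_add_sampleMean_sub_log_le hg_meas hε hg (hc0 n) hn

end SampleMean

theorem integral_comp_prodMap_id {α β γ : Type*} [MeasurableSpace α] [MeasurableSpace β]
    [MeasurableSpace γ] {μ : Measure α} {ν : Measure β} {ρ : Measure γ} [SFinite μ] [SFinite ν]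
    [SFinite ρ] {e : β → γ} (he : MeasurePreserving e ν ρ) {F : α → γ → ℝ}
    (hF : Integrable (uncurry F) (μ.prod ρ)) :
    ∫ p : α × β, F p.1 (e p.2) ∂(μ.prod ν) = ∫ x, ∫ y, F x y ∂ρ ∂μ := by
  have hmp := (MeasurePreserving.id μ).prod he
  refine Eq.trans ?_ (integral_prod _ hF)
  rw [← hmp.map_eq, integral_map hmp.aemeasurable (hmp.map_eq ▸ hF.aestronglyMeasurable)]
  rfl

section Score

variable {X : Type*} {s : X → X → ℝ} {b : ℝ}

theorem abs_log_one_div_mul_sum_exp_le (hsb : ∀ x y, |s x y| ≤ b) {M : ℕ} (hM : M ≠ 0)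
    (x : X) (y : Fin M → X) : |log ((1 / (M : ℝ)) * ∑ m, exp (s x (y m)))| ≤ b :=
  abs_log_le_of_mem_Icc_exp_s11 (one_div_mul_sum_mem_Icc hM fun _ => exp_mem_Icc_of_abs_le (hsb _ _))

theorem add_one_div_mul_sum_exp_mem_Icc (hsb : ∀ x y, |s x y| ≤ b) {n : ℕ} (hn : n ≠ 0) {c : ℝ}
    (hc : c ∈ Set.Icc 0 (exp b)) (x : X) (z : Fin n → X) :
    c + (1 / (n : ℝ)) * ∑ i, exp (s x (z i)) ∈ Set.Icc (exp (-(b + 1))) (exp (b + 1)) := by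
  have havg := one_div_mul_sum_mem_Icc hn fun i => exp_mem_Icc_of_abs_le (hsb x (z i))
  have htwo : 2 ≤ exp 1 := by linarith [add_one_le_exp 1]
  constructor
  · linarith [hc.1, havg.1, exp_le_exp.2 (by linarith : -(b + 1) ≤ -b)]
  · rw [exp_add]
    nlinarith [hc.2, havg.2, exp_pos b]

theorem exp_div_natCast_mem_Icc (hsb : ∀ x y, |s x y| ≤ b) (K : ℕ) (x x' : X) :
    exp (s x x') / K ∈ Set.Icc 0 (exp b) := by
  refine ⟨by positivity, ?_⟩
  rcases Nat.eq_zero_or_pos K with rfl | hK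
  · simp [(exp_pos b).le]
  · exact (div_le_self (exp_pos _).le (by exact_mod_cast hK)).trans
      (exp_mem_Icc_of_abs_le (hsb x x')).2

variable [MeasurableSpace X] {μ : Measure X} [IsProbabilityMeasure μ]

theorem integrable_score (hs : Measurable (uncurry s)) (hsb : ∀ x y, |s x y| ≤ b) :
    Integrable (uncurry s) (μ.prod μ) :=
  Integrable.of_bound hs.aestronglyMeasurable b (ae_of_all _ fun q => hsb q.1 q.2)

theorem integral_revNCE_eq (hs : Measurable (uncurry s)) (hsb : ∀ x y, |s x y| ≤ b)
    {M K : ℕ} (hM : M ≠ 0) (hK : K ≠ 0) :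
    ∫ p : X × (Fin M → X) × (Fin K → X), (1 / (K : ℝ)) * ∑ k,
        -log (((1 / (M : ℝ)) * ∑ m, exp (s p.1 (p.2.1 m))) / exp (s p.1 (p.2.2 k)))
      ∂(μ.prod ((Measure.pi fun _ : Fin M => μ).prod (Measure.pi fun _ : Fin K => μ)))
    = (∫ x, ∫ x', s x x' ∂μ ∂μ) - ∫ x, ∫ y : Fin M → X,
        log ((1 / (M : ℝ)) * ∑ m, exp (s x (y m))) ∂(Measure.pi fun _ => μ) ∂μ := by
  set P := μ.prod ((Measure.pi fun _ : Fin M => μ).prod (Measure.pi fun _ : Fin K => μ))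
  have hpt : ∀ p : X × (Fin M → X) × (Fin K → X), (1 / (K : ℝ)) * ∑ k,
      -log (((1 / (M : ℝ)) * ∑ m, exp (s p.1 (p.2.1 m))) / exp (s p.1 (p.2.2 k)))
      = (1 / (K : ℝ)) * ∑ k, s p.1 (p.2.2 k)
        - log ((1 / (M : ℝ)) * ∑ m, exp (s p.1 (p.2.1 m))) := by
    intro p
    have hpos : 0 < (1 / (M : ℝ)) * ∑ m, exp (s p.1 (p.2.1 m)) :=
      (exp_pos _).trans_le
        (one_div_mul_sum_mem_Icc hM fun m => exp_mem_Icc_of_abs_le (hsb p.1 (p.2.1 m))).1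
    simp only [log_div hpos.ne' (exp_ne_zero _), log_exp, neg_sub, Finset.sum_sub_distrib,
      Finset.sum_const, Finset.card_univ, Fintype.card_fin, nsmul_eq_mul]
    field_simp
  have hterm : ∀ k : Fin K,
      Integrable (fun p : X × (Fin M → X) × (Fin K → X) => s p.1 (p.2.2 k)) P :=
    fun k => Integrable.of_bound (by fun_prop : Measurable _).aestronglyMeasurable b
      (ae_of_all _ fun p => hsb _ _)
  have hlog : Integrable (fun p : X × (Fin M → X) => log ((1 / (M : ℝ)) * ∑ m, exp (s p.1 (p.2 m))))
      (μ.prod (Measure.pi fun _ : Fin M => μ)) :=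
    Integrable.of_bound (by fun_prop : Measurable _).aestronglyMeasurable b
      (ae_of_all _ fun p => abs_log_one_div_mul_sum_exp_le hsb hM _ _)
  have hlogP : Integrable (fun p : X × (Fin M → X) × (Fin K → X) =>
      log ((1 / (M : ℝ)) * ∑ m, exp (s p.1 (p.2.1 m)))) P :=
    ((MeasurePreserving.id μ).prod measurePreserving_fst).integrable_comp_of_integrable hlog
  rw [integral_congr_ae (ae_of_all _ hpt),
    integral_sub ((integrable_finsetSum _ fun k _ => hterm k).const_mul _) hlogP,
    integral_const_mul, integral_finsetSum _ fun k _ => hterm k,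
    show ∫ p, log ((1 / (M : ℝ)) * ∑ m, exp (s p.1 (p.2.1 m))) ∂P = _ from
      integral_comp_prodMap_id
        (F := fun x (y : Fin M → X) => log ((1 / (M : ℝ)) * ∑ m, exp (s x (y m))))
        measurePreserving_fst hlog]
  congr 1
  have hk : ∀ k : Fin K, ∫ p, s p.1 (p.2.2 k) ∂P = ∫ x, ∫ x', s x x' ∂μ ∂μ := fun k =>
    integral_comp_prodMap_id (e := fun w : (Fin M → X) × (Fin K → X) => w.2 k)
      ((measurePreserving_eval (fun _ => μ) k).comp measurePreserving_snd) (integrable_score hs hsb)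
  simp only [hk, Finset.sum_const, Finset.card_univ, Fintype.card_fin, nsmul_eq_mul]
  field_simp

theorem integral_infoNCE_sub_log_eq (hs : Measurable (uncurry s)) (hsb : ∀ x y, |s x y| ≤ b)
    {K : ℕ} (hK : K ≠ 0) :
    ∫ p : X × X × (Fin K → X), -log (exp (s p.1 p.2.1) /
        (exp (s p.1 p.2.1) + ∑ k, exp (s p.1 (p.2.2 k))))
      ∂(μ.prod (μ.prod (Measure.pi fun _ : Fin K => μ))) - log K
    = ∫ q : X × X, ∫ z : Fin K → X, log (exp (s q.1 q.2) / K + (1 / (K : ℝ)) * ∑ k,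
        exp (s q.1 (z k))) ∂(Measure.pi fun _ => μ) ∂(μ.prod μ)
      - ∫ x, ∫ x', s x x' ∂μ ∂μ := by
  set G : X × X × (Fin K → X) → ℝ := fun p =>
    log (exp (s p.1 p.2.1) / K + (1 / (K : ℝ)) * ∑ k, exp (s p.1 (p.2.2 k)))
  have hpt : ∀ p : X × X × (Fin K → X), -log (exp (s p.1 p.2.1) /
      (exp (s p.1 p.2.1) + ∑ k, exp (s p.1 (p.2.2 k)))) = G p + log K - s p.1 p.2.1 := by
    intro p
    have hsum : 0 < exp (s p.1 p.2.1) + ∑ k, exp (s p.1 (p.2.2 k)) := by positivity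
    have hG : G p = log ((exp (s p.1 p.2.1) + ∑ k, exp (s p.1 (p.2.2 k))) / K) := by
      simp only [G, add_div, one_div_mul_eq_div]
    rw [hG, log_div hsum.ne' (Nat.cast_ne_zero.2 hK), log_div (exp_ne_zero _) hsum.ne', log_exp]
    ring
  have hG_bound : ∀ p, |G p| ≤ b + 1 := fun p => abs_log_le_of_mem_Icc_exp_s11
    (add_one_div_mul_sum_exp_mem_Icc hsb hK (exp_div_natCast_mem_Icc hsb K p.1 p.2.1) p.1 p.2.2)
  have hG_int : Integrable G (μ.prod (μ.prod (Measure.pi fun _ : Fin K => μ))) :=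
    Integrable.of_bound (by fun_prop : Measurable G).aestronglyMeasurable (b + 1)
      (ae_of_all _ hG_bound)
  have hG_assoc := measurePreserving_prodAssoc μ μ (Measure.pi fun _ : Fin K => μ)
  have hs_int : Integrable (fun p : X × X × (Fin K → X) => s p.1 p.2.1)
      (μ.prod (μ.prod (Measure.pi fun _ : Fin K => μ))) :=
    ((MeasurePreserving.id μ).prod measurePreserving_fst).integrable_comp_of_integrable
      (integrable_score hs hsb)
  have hG_iter : ∫ p, G p ∂(μ.prod (μ.prod (Measure.pi fun _ : Fin K => μ)))
      = ∫ q : X × X, ∫ z : Fin K → X, log (exp (s q.1 q.2) / K + (1 / (K : ℝ)) * ∑ k,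
          exp (s q.1 (z k))) ∂(Measure.pi fun _ => μ) ∂(μ.prod μ) := by
    rw [← hG_assoc.integral_comp' G]
    exact integral_prod _ (hG_assoc.integrable_comp_of_integrable hG_int)
  rw [integral_congr_ae (ae_of_all _ hpt),
    integral_sub (f := fun p => G p + log K) (hG_int.add (integrable_const _)) hs_int,
    integral_add hG_int (integrable_const _), integral_const, probReal_univ, one_smul, hG_iter,
    show ∫ p, s p.1 p.2.1 ∂(μ.prod (μ.prod (Measure.pi fun _ : Fin K => μ))) = _ from
      integral_comp_prodMap_id measurePreserving_fst (integrable_score hs hsb)]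
  ring

theorem tendsto_integral_integral_log_add_sampleMean_exp {Y : Type*} [MeasurableSpace Y]
    {ρ : Measure Y} [IsProbabilityMeasure ρ] (hs : Measurable (uncurry s))
    (hsb : ∀ x y, |s x y| ≤ b) {e : Y → X} (he : Measurable e) {c : ℕ → Y → ℝ}
    (hc_meas : ∀ n, Measurable (c n)) (hc_mem : ∀ n y, c n y ∈ Set.Icc 0 (exp b))
    (hc : ∀ y, Tendsto (fun n => c n y) atTop (𝓝 0)) :
    Tendsto (fun n : ℕ => ∫ y, ∫ z : Fin n → X,
        log (c n y + (1 / (n : ℝ)) * ∑ i, exp (s (e y) (z i))) ∂(Measure.pi fun _ => μ) ∂ρ)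
      atTop (𝓝 (∫ y, log (∫ x', exp (s (e y) x') ∂μ) ∂ρ)) := by
  refine tendsto_integral_filter_of_dominated_convergence (fun _ => b + 1)
    (Eventually.of_forall fun n => ?_) ?_ (integrable_const _) (ae_of_all _ fun y => ?_)
  · exact (StronglyMeasurable.integral_prod_right' (f := fun q : Y × (Fin n → X) =>
      log (c n q.1 + (1 / (n : ℝ)) * ∑ i, exp (s (e q.1) (q.2 i))))
      (by fun_prop : Measurable _).stronglyMeasurable).aestronglyMeasurable
  · filter_upwards [eventually_ne_atTop 0] with n hn
    refine ae_of_all _ fun y => ?_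
    simpa using norm_integral_le_of_norm_le_const (μ := Measure.pi fun _ : Fin n => μ)
      (f := fun z => log (c n y + (1 / (n : ℝ)) * ∑ i, exp (s (e y) (z i))))
      (ae_of_all _ fun z => abs_log_le_of_mem_Icc_exp_s11
        (add_one_div_mul_sum_exp_mem_Icc hsb hn (hc_mem n y) (e y) z))
  · exact tendsto_integral_log_add_sampleMean (by fun_prop) (exp_pos _)
      (fun x' => exp_mem_Icc_of_abs_le (hsb (e y) x')) (fun n => (hc_mem n y).1) (hc y)

end Score

theorem revNCE_additional_risk_limit_general
    {X : Type*} [MeasurableSpace X] (μ : Measure X) [IsProbabilityMeasure μ]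
    (d : ℕ)
    (f : X → EuclideanSpace ℝ (Fin d)) (hf : Measurable f)
    (B : ℝ) (hB : ∀ x, ‖f x‖ ≤ B)
    (J : ℕ → ℕ → ℝ)
    (hJ : ∀ M K : ℕ, J M K =
      ∫ p : X × (Fin M → X) × (Fin K → X),
        (1 / (K : ℝ)) * ∑ k,
          -Real.log (((1 / (M : ℝ)) * ∑ m, Real.exp ((inner ℝ (f p.1) (f (p.2.1 m)) : ℝ)))
            / Real.exp ((inner ℝ (f p.1) (f (p.2.2 k)) : ℝ)))
        ∂(μ.prod ((Measure.pi fun _ : Fin M => μ).prod (Measure.pi fun _ : Fin K => μ))))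
    (I : ℕ → ℝ)
    (hI : ∀ K : ℕ, I K =
      ∫ p : X × X × (Fin K → X),
        -Real.log (Real.exp ((inner ℝ (f p.1) (f p.2.1) : ℝ)) /
          (Real.exp ((inner ℝ (f p.1) (f p.2.1) : ℝ))
            + ∑ k, Real.exp ((inner ℝ (f p.1) (f (p.2.2 k)) : ℝ))))
        ∂(μ.prod (μ.prod (Measure.pi fun _ : Fin K => μ)))) :
    (∀ K : ℕ, 1 ≤ K →
      Tendsto (fun M : ℕ => J M K) atTop
        (nhds ((∫ x, ∫ x', (inner ℝ (f x) (f x') : ℝ) ∂μ ∂μ)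
          - ∫ x, Real.log (∫ x', Real.exp ((inner ℝ (f x) (f x') : ℝ)) ∂μ) ∂μ))) ∧
    Tendsto (fun K : ℕ => I K - Real.log (K : ℝ)) atTop
      (nhds (-((∫ x, ∫ x', (inner ℝ (f x) (f x') : ℝ) ∂μ ∂μ)
          - ∫ x, Real.log (∫ x', Real.exp ((inner ℝ (f x) (f x') : ℝ)) ∂μ) ∂μ))) := by
  have hs : Measurable (uncurry fun x y => (inner ℝ (f x) (f y) : ℝ)) := by fun_prop
  have hsb : ∀ x y, |(inner ℝ (f x) (f y) : ℝ)| ≤ B * B := fun x y =>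
    (abs_real_inner_le_norm _ _).trans
      (mul_le_mul (hB x) (hB y) (norm_nonneg _) ((norm_nonneg _).trans (hB x)))
  refine ⟨fun K hK => ?_, ?_⟩
  · have hlim := tendsto_integral_integral_log_add_sampleMean_exp (μ := μ) (ρ := μ) hs hsb
      measurable_id (c := fun _ _ => 0) (fun _ => measurable_const)
      (fun _ _ => ⟨le_rfl, (exp_pos _).le⟩) (fun _ => tendsto_const_nhds)
    simp only [zero_add, id] at hlim
    refine Tendsto.congr' ?_ (tendsto_const_nhds.sub hlim)
    filter_upwards [eventually_ne_atTop 0] with M hM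
    rw [hJ, integral_revNCE_eq hs hsb hM (by omega)]
  · have hlim := tendsto_integral_integral_log_add_sampleMean_exp (μ := μ) (ρ := μ.prod μ) hs hsb
      measurable_fst (c := fun K q => exp (inner ℝ (f q.1) (f q.2)) / K) (fun _ => by fun_prop)
      (fun K q => exp_div_natCast_mem_Icc hsb K q.1 q.2)
      (fun q => tendsto_const_div_atTop_nhds_zero_nat _)
    rw [integral_fun_fst (f := fun x => log (∫ x', exp (inner ℝ (f x) (f x')) ∂μ)),
      probReal_univ, one_smul] at hlim
    rw [neg_sub]
    refine Tendsto.congr' ?_ (hlim.sub tendsto_const_nhds)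
    filter_upwards [eventually_ne_atTop 0] with K hK
    rw [hI, integral_infoNCE_sub_log_eq hs hsb hK]

/-- Theorem 3 (RevNCE): the additional risk of the reverse InfoNCE loss with M
positives and K negatives (all i.i.d. from μ) converges, as M → ∞, to
∫∫⟨f(x),f(x')⟩ dμdμ − ∫ log ∫ e^{⟨f(x),f(x')⟩} dμ dμ, which is the negative of the
limit additional risk of InfoNCE, lim_{K'→∞} (I_{K'} − log K'). -/
theorem revNCE_additional_risk_limit
    {X : Type*} [MeasurableSpace X] (μ : Measure X) [IsProbabilityMeasure μ]
    (d : ℕ) (hd : 1 ≤ d)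
    (f : X → EuclideanSpace ℝ (Fin d)) (hf : Measurable f)
    (B : ℝ) (hB : ∀ x, ‖f x‖ ≤ B)
    (J : ℕ → ℕ → ℝ)
    (hJ : ∀ M K : ℕ, J M K =
      ∫ p : X × (Fin M → X) × (Fin K → X),
        (1 / (K : ℝ)) * ∑ k,
          -Real.log (((1 / (M : ℝ)) * ∑ m, Real.exp ((inner ℝ (f p.1) (f (p.2.1 m)) : ℝ)))
            / Real.exp ((inner ℝ (f p.1) (f (p.2.2 k)) : ℝ)))
        ∂(μ.prod ((Measure.pi fun _ : Fin M => μ).prod (Measure.pi fun _ : Fin K => μ))))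
    (I : ℕ → ℝ)
    (hI : ∀ K : ℕ, I K =
      ∫ p : X × X × (Fin K → X),
        -Real.log (Real.exp ((inner ℝ (f p.1) (f p.2.1) : ℝ)) /
          (Real.exp ((inner ℝ (f p.1) (f p.2.1) : ℝ))
            + ∑ k, Real.exp ((inner ℝ (f p.1) (f (p.2.2 k)) : ℝ))))
        ∂(μ.prod (μ.prod (Measure.pi fun _ : Fin K => μ)))) :
    (∀ K : ℕ, 1 ≤ K →
      Tendsto (fun M : ℕ => J M K) atTop
        (nhds ((∫ x, ∫ x', (inner ℝ (f x) (f x') : ℝ) ∂μ ∂μ)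
          - ∫ x, Real.log (∫ x', Real.exp ((inner ℝ (f x) (f x') : ℝ)) ∂μ) ∂μ))) ∧
    Tendsto (fun K : ℕ => I K - Real.log (K : ℝ)) atTop
      (nhds (-((∫ x, ∫ x', (inner ℝ (f x) (f x') : ℝ) ∂μ ∂μ)
          - ∫ x, Real.log (∫ x', Real.exp ((inner ℝ (f x) (f x') : ℝ)) ∂μ) ∂μ))) :=
  revNCE_additional_risk_limit_general μ d f hf B hB J hJ I hI
end

section
/- Let (X, 𝔄) be a measurable space, μ a probability measure on X, d ≥ 1, and f : X → ℝ^d a bounded measurable map. Suppose there is a measurable set S ⊆ X with μ(S) > 0 such that for every x ∈ S the function x' ↦ ⟨f(x), f(x')⟩ is not μ-almost-everywhere equal to a constant. Then ∫_X ∫_X ⟨f(x), f(x')⟩ dμ(x') dμ(x) < ∫_X log( ∫_X exp(⟨f(x), f(x')⟩) dμ(x') ) dμ(x); that is, the limit additional risk of InfoNCE, lim_{K→∞}(I_K − log K), is strictly positive and depends on f, so the InfoNCE loss does not satisfy the robust condition (its additional risk is not constant in f). -/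
/-!
Fix an anchor `x`. By Jensen's inequality for the strictly convex exponential,
`exp (∫ ⟨f x, f x'⟩ dμ(x')) ≤ ∫ exp ⟨f x, f x'⟩ dμ(x')`,
strictly when `x' ↦ ⟨f x, f x'⟩` is not a.e. constant, i.e. for `x ∈ S`. Taking logarithms gives
a pointwise inequality between the two inner integrals which is strict on `S`; since both are
bounded by `B²`, integrating over `x` keeps it strict because `μ S > 0`.
-/

open MeasureTheory Real Set

section Jensen

variable {α : Type*} [MeasurableSpace α] {μ : Measure α} [IsProbabilityMeasure μ]
  {g : α → ℝ}

theorem integral_le_log_integral_exp (hg : Integrable g μ)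
    (hexp : Integrable (fun x => exp (g x)) μ) :
    ∫ x, g x ∂μ ≤ log (∫ x, exp (g x) ∂μ) := by
  have jensen : exp (∫ x, g x ∂μ) ≤ ∫ x, exp (g x) ∂μ :=
    convexOn_exp.map_integral_le continuousOn_exp isClosed_univ
      (.of_forall fun _ => mem_univ _) hg hexp
  exact (le_log_iff_exp_le ((exp_pos _).trans_le jensen)).2 jensen

theorem integral_lt_log_integral_exp (hg : Integrable g μ)
    (hexp : Integrable (fun x => exp (g x)) μ) (hne : ∀ c : ℝ, ¬ g =ᵐ[μ] fun _ => c) :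
    ∫ x, g x ∂μ < log (∫ x, exp (g x) ∂μ) := by
  have jensen : exp (∫ x, g x ∂μ) < ∫ x, exp (g x) ∂μ := by
    rcases strictConvexOn_exp.ae_eq_const_or_map_average_lt continuousOn_exp isClosed_univ
      (.of_forall fun _ => mem_univ _) hg hexp with hconst | hlt
    · exact absurd hconst (hne _)
    · simpa only [average_eq_integral] using hlt
  exact (lt_log_iff_exp_lt ((exp_pos _).trans jensen)).2 jensen

end Jensen

section Bounded

variable {α : Type*} [MeasurableSpace α] {μ : Measure α} {g : α → ℝ} {M : ℝ}

theorem integrable_of_abs_le [IsFiniteMeasure μ] (hg : AEStronglyMeasurable g μ)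
    (hgM : ∀ x, |g x| ≤ M) : Integrable g μ :=
  .of_bound hg M (.of_forall hgM)

theorem integrable_exp_of_abs_le [IsFiniteMeasure μ] (hg : AEStronglyMeasurable g μ)
    (hgM : ∀ x, |g x| ≤ M) : Integrable (fun x => exp (g x)) μ :=
  integrable_of_abs_le (continuous_exp.comp_aestronglyMeasurable hg) fun x => by
    rw [abs_exp]
    exact exp_le_exp.2 (le_of_abs_le (hgM x))

theorem abs_log_integral_exp_le [IsProbabilityMeasure μ] (hg : AEStronglyMeasurable g μ)
    (hgM : ∀ x, |g x| ≤ M) : |log (∫ x, exp (g x) ∂μ)| ≤ M := by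
  have hexp := integrable_exp_of_abs_le hg hgM
  have lower : exp (-M) ≤ ∫ x, exp (g x) ∂μ := by
    simpa using integral_mono (integrable_const _) hexp
      fun x => exp_le_exp.2 (neg_le_of_abs_le (hgM x))
  have upper : ∫ x, exp (g x) ∂μ ≤ exp M := by
    simpa using integral_mono hexp (integrable_const _)
      fun x => exp_le_exp.2 (le_of_abs_le (hgM x))
  have hlower := log_le_log (exp_pos _) lower
  have hupper := log_le_log ((exp_pos _).trans_le lower) upper
  rw [log_exp] at hlower hupper
  exact abs_le.2 ⟨hlower, hupper⟩

theorem integral_lt_integral_of_ae_le_of_lt_on {h : α → ℝ} (hg : Integrable g μ)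
    (hh : Integrable h μ) (hle : g ≤ᵐ[μ] h) {S : Set α} (hS : μ S ≠ 0)
    (hlt : ∀ x ∈ S, g x < h x) : ∫ x, g x ∂μ < ∫ x, h x ∂μ := by
  rw [← sub_pos, ← integral_sub hh hg,
    integral_pos_iff_support_of_nonneg_ae (hle.mono fun x hx => sub_nonneg.2 hx) (hh.sub hg)]
  exact hS.bot_lt.trans_le (measure_mono fun x hx => (sub_pos.2 (hlt x hx)).ne')

end Bounded

section Kernel

variable {X Y : Type*} [MeasurableSpace X] [MeasurableSpace Y] {μ : Measure X} {ν : Measure Y}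
  [IsFiniteMeasure μ] [IsProbabilityMeasure ν] {F : X → Y → ℝ} {M : ℝ}

theorem integral_integral_lt_integral_log_integral_exp (hF : Measurable (Function.uncurry F))
    (hFM : ∀ x y, |F x y| ≤ M) {S : Set X} (hS : μ S ≠ 0)
    (hne : ∀ x ∈ S, ∀ c : ℝ, ¬ F x =ᵐ[ν] fun _ => c) :
    ∫ x, ∫ y, F x y ∂ν ∂μ < ∫ x, log (∫ y, exp (F x y) ∂ν) ∂μ := by
  have hFx : ∀ x, AEStronglyMeasurable (F x) ν := fun x =>
    (hF.comp measurable_prodMk_left).aestronglyMeasurable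
  have hFi : ∀ x, Integrable (F x) ν := fun x => integrable_of_abs_le (hFx x) (hFM x)
  have hexpi : ∀ x, Integrable (fun y => exp (F x y)) ν := fun x =>
    integrable_exp_of_abs_le (hFx x) (hFM x)
  have hmean : Integrable (fun x => ∫ y, F x y ∂ν) μ :=
    integrable_of_abs_le hF.stronglyMeasurable.integral_prod_right'.aestronglyMeasurable
      fun x => (abs_integral_le_integral_abs).trans <| by
        simpa using integral_mono (hFi x).abs (integrable_const M) (hFM x)
  have hlogexp : Integrable (fun x => log (∫ y, exp (F x y) ∂ν)) μ := by
    have hmeas : Measurable fun x => ∫ y, exp (F x y) ∂ν :=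
      (measurable_exp.comp hF).stronglyMeasurable.integral_prod_right'.measurable
    exact integrable_of_abs_le (measurable_log.comp hmeas).aestronglyMeasurable
      fun x => abs_log_integral_exp_le (hFx x) (hFM x)
  exact integral_lt_integral_of_ae_le_of_lt_on hmean hlogexp
    (.of_forall fun x => integral_le_log_integral_exp (hFi x) (hexpi x)) hS
    fun x hx => integral_lt_log_integral_exp (hFi x) (hexpi x) (hne x hx)

end Kernel

theorem infoNCE_limit_additional_risk_pos_general
    {X : Type*} [MeasurableSpace X] (μ : Measure X) [IsProbabilityMeasure μ]
    (d : ℕ)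
    (f : X → EuclideanSpace ℝ (Fin d)) (hf : Measurable f)
    (B : ℝ) (hB : ∀ x, ‖f x‖ ≤ B)
    (S : Set X) (hSpos : 0 < μ S)
    (hnonconst : ∀ x ∈ S, ∀ c : ℝ,
      ¬ ((fun x' => (inner ℝ (f x) (f x') : ℝ)) =ᵐ[μ] fun _ => c)) :
    (∫ x, ∫ x', (inner ℝ (f x) (f x') : ℝ) ∂μ ∂μ)
      < ∫ x, Real.log (∫ x', Real.exp ((inner ℝ (f x) (f x') : ℝ)) ∂μ) ∂μ := by
  have hbound : ∀ x x', |(inner ℝ (f x) (f x') : ℝ)| ≤ B * B := fun x x' =>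
    (abs_real_inner_le_norm _ _).trans
      (mul_le_mul (hB x) (hB x') (norm_nonneg _) ((norm_nonneg _).trans (hB x)))
  exact integral_integral_lt_integral_log_integral_exp
    ((hf.comp measurable_fst).inner (hf.comp measurable_snd)) hbound hSpos.ne' hnonconst

/-- InfoNCE is non-robust: if on a set S of positive measure of anchors x the
similarity x' ↦ ⟨f(x),f(x')⟩ is not μ-a.e. constant, then the limit additional risk of
InfoNCE is strictly positive:
∫∫⟨f(x),f(x')⟩ dμdμ < ∫ log ∫ e^{⟨f(x),f(x')⟩} dμ dμ. -/
theorem infoNCE_limit_additional_risk_pos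
    {X : Type*} [MeasurableSpace X] (μ : Measure X) [IsProbabilityMeasure μ]
    (d : ℕ) (hd : 1 ≤ d)
    (f : X → EuclideanSpace ℝ (Fin d)) (hf : Measurable f)
    (B : ℝ) (hB : ∀ x, ‖f x‖ ≤ B)
    (S : Set X) (hS : MeasurableSet S) (hSpos : 0 < μ S)
    (hnonconst : ∀ x ∈ S, ∀ c : ℝ,
      ¬ ((fun x' => (inner ℝ (f x) (f x') : ℝ)) =ᵐ[μ] fun _ => c)) :
    (∫ x, ∫ x', (inner ℝ (f x) (f x') : ℝ) ∂μ ∂μ)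
      < ∫ x, Real.log (∫ x', Real.exp ((inner ℝ (f x) (f x') : ℝ)) ∂μ) ∂μ :=
  infoNCE_limit_additional_risk_pos_general μ d f hf B hB S hSpos hnonconst
end

section
/- Let (X, 𝔄) be a measurable space, μ a probability measure on X, d ≥ 1, and K ≥ 1. If λ = 1/(K+1), then for every bounded measurable f : X → ℝ^d the additional risk of the RINCE loss vanishes: ∫_{X^{K+2}} [ −(1−λ) exp(⟨f(x), f(x⁺)⟩) + λ ∑_{k=1}^K exp(⟨f(x), f(x⁻_k)⟩) ] dμ^{⊗(K+2)} = 0. Hence the additional risk Δℛ(ℒ_RINCE; f) is the constant 0 independently of f, so RINCE with λ = 1/(K+1) satisfies the robust condition. -/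
/-!
Under the product measure the anchor–positive pair and every anchor–negative pair have the
same law `μ ⊗ μ`, so each of the `K + 1` exponential terms integrates to the same number
`∫ exp ⟪f x, f y⟫ d(μ ⊗ μ)`. The risk is therefore `(-(1 - λ) + K λ)` times that number, and
the weight vanishes exactly when `λ = 1 / (K + 1)`.
-/

open MeasureTheory

section MeasurePreserving

variable {Ω E : Type*} [MeasurableSpace Ω] [MeasurableSpace E] {ν : Measure Ω} {ρ : Measure E}

lemma MeasureTheory.MeasurePreserving.integral_comp_of_integrable {φ : Ω → E}
    (hφ : MeasurePreserving φ ν ρ) {G : E → ℝ} (hG : Integrable G ρ) :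
    ∫ ω, G (φ ω) ∂ν = ∫ y, G y ∂ρ := by
  rw [← hφ.map_eq] at hG ⊢
  exact (integral_map hφ.measurable.aemeasurable hG.aestronglyMeasurable).symm

lemma integral_mul_comp_add_mul_sum_comp {ι : Type*} [Fintype ι] {φ : Ω → E} {ψ : ι → Ω → E}
    (hφ : MeasurePreserving φ ν ρ) (hψ : ∀ i, MeasurePreserving (ψ i) ν ρ)
    {G : E → ℝ} (hG : Integrable G ρ) (a b : ℝ) :
    ∫ ω, (a * G (φ ω) + b * ∑ i, G (ψ i ω)) ∂ν
      = (a + Fintype.card ι * b) * ∫ y, G y ∂ρ := by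
  have hGφ : Integrable (fun ω => G (φ ω)) ν := hφ.integrable_comp_of_integrable hG
  have hGψ : ∀ i, Integrable (fun ω => G (ψ i ω)) ν :=
    fun i => (hψ i).integrable_comp_of_integrable hG
  rw [integral_add (hGφ.const_mul a) ((integrable_finsetSum _ fun i _ => hGψ i).const_mul b),
    integral_const_mul, integral_const_mul, integral_finsetSum _ fun i _ => hGψ i,
    hφ.integral_comp_of_integrable hG,
    Finset.sum_congr rfl fun i _ => (hψ i).integral_comp_of_integrable hG,
    Finset.sum_const, Finset.card_univ, nsmul_eq_mul]
  ring

end MeasurePreserving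

section Sampling

variable {X Y : Type*} [MeasurableSpace X] [MeasurableSpace Y] (μ : Measure X) [SFinite μ]
  (ν : Measure Y) [IsProbabilityMeasure ν] {ι : Type*} [Fintype ι]

lemma measurePreserving_anchor_positive :
    MeasurePreserving (fun p : X × Y × (ι → Y) => (p.1, p.2.1))
      (μ.prod (ν.prod (Measure.pi fun _ : ι => ν))) (μ.prod ν) :=
  (MeasurePreserving.id μ).prod measurePreserving_fst

lemma measurePreserving_anchor_negative (i : ι) :
    MeasurePreserving (fun p : X × Y × (ι → Y) => (p.1, p.2.2 i))
      (μ.prod (ν.prod (Measure.pi fun _ : ι => ν))) (μ.prod ν) :=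
  (MeasurePreserving.id μ).prod ((measurePreserving_eval _ i).comp measurePreserving_snd)

end Sampling

lemma integrable_exp_inner_of_norm_le {X : Type*} [MeasurableSpace X] (ν : Measure (X × X))
    [IsFiniteMeasure ν] {d : ℕ} {f : X → EuclideanSpace ℝ (Fin d)} (hf : Measurable f) {B : ℝ}
    (hB : ∀ x, ‖f x‖ ≤ B) :
    Integrable (fun q : X × X => Real.exp (inner ℝ (f q.1) (f q.2))) ν := by
  refine .of_bound (by fun_prop) (Real.exp (B * B)) (.of_forall fun q => ?_)
  rw [Real.norm_eq_abs, abs_of_pos (Real.exp_pos _), Real.exp_le_exp]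
  calc inner ℝ (f q.1) (f q.2) ≤ ‖f q.1‖ * ‖f q.2‖ := real_inner_le_norm _ _
    _ ≤ B * B := mul_le_mul (hB _) (hB _) (norm_nonneg _) ((norm_nonneg _).trans (hB q.1))

theorem rince_additional_risk_vanishes_general
    {X : Type*} [MeasurableSpace X] (μ : Measure X) [IsProbabilityMeasure μ]
    (d : ℕ)
    (K : ℕ)
    (lam : ℝ) (hlam : lam = 1 / ((K : ℝ) + 1)) :
    ∀ f : X → EuclideanSpace ℝ (Fin d), Measurable f →
      (∃ B : ℝ, ∀ x, ‖f x‖ ≤ B) →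
      ∫ p : X × X × (Fin K → X),
          (-(1 - lam) * Real.exp ((inner ℝ (f p.1) (f p.2.1) : ℝ))
            + lam * ∑ k, Real.exp ((inner ℝ (f p.1) (f (p.2.2 k)) : ℝ)))
          ∂(μ.prod (μ.prod (Measure.pi fun _ : Fin K => μ)))
        = 0 := by
  rintro f hf ⟨B, hB⟩
  have hweights : -(1 - lam) + (Fintype.card (Fin K) : ℝ) * lam = 0 := by
    rw [Fintype.card_fin, hlam]
    field_simp
    ring
  rw [integral_mul_comp_add_mul_sum_comp (measurePreserving_anchor_positive μ μ)
    (measurePreserving_anchor_negative μ μ) (integrable_exp_inner_of_norm_le _ hf hB),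
    hweights, zero_mul]

/-- RINCE with λ = 1/(K+1) satisfies the robust condition: for every bounded
measurable representation f, the additional risk of the RINCE loss vanishes. -/
theorem rince_additional_risk_vanishes
    {X : Type*} [MeasurableSpace X] (μ : Measure X) [IsProbabilityMeasure μ]
    (d : ℕ) (hd : 1 ≤ d)
    (K : ℕ) (hK : 1 ≤ K)
    (lam : ℝ) (hlam : lam = 1 / ((K : ℝ) + 1)) :
    ∀ f : X → EuclideanSpace ℝ (Fin d), Measurable f →
      (∃ B : ℝ, ∀ x, ‖f x‖ ≤ B) →
      ∫ p : X × X × (Fin K → X),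
          (-(1 - lam) * Real.exp ((inner ℝ (f p.1) (f p.2.1) : ℝ))
            + lam * ∑ k, Real.exp ((inner ℝ (f p.1) (f (p.2.2 k)) : ℝ)))
          ∂(μ.prod (μ.prod (Measure.pi fun _ : Fin K => μ)))
        = 0 :=
  rince_additional_risk_vanishes_general μ d K lam hlam
end

section
/- Let (X, 𝔄) be a measurable space, μ a probability measure on X, d ≥ 1, f : X → ℝ^d a bounded measurable map, and t ∈ ℝ. For x ∈ X let N(x;t) := {x' ∈ X : ⟨f(x), f(x')⟩ ≥ t}, and assume μ(N(x;t)) > 0 for μ-almost every x. Then ∫_X ( μ(N(x;t)) )⁻¹ ( ∫_{N(x;t)} ⟨f(x), f(x')⟩ dμ(x') ) dμ(x) ≥ ∫_X ∫_X ⟨f(x), f(x')⟩ dμ(x') dμ(x). Consequently the limit additional risk of InfoNCE with nearest-neighbor restricted positives, − ∫ E_{x' ∈ N(x;t)} ⟨f(x), f(x')⟩ dμ(x) + ∫ log ∫ e^{⟨f(x), f(x')⟩} dμ dμ, is at most the limit additional risk of plain InfoNCE, − ∫∫ ⟨f(x), f(x')⟩ dμ² + ∫ log ∫ e^{⟨f(x),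 f(x')⟩} dμ dμ. -/
open MeasureTheory

/-!
Write `g x x' = ⟨f x, f x'⟩` and `s = N(x;t) = {x' | t ≤ g x x'}`. For fixed `x`, the average
`a` of `g x` over `s` is at least `t`, while `g x ≤ t` off `s`; hence
`∫ g x = μ(s) a + ∫_{sᶜ} g x ≤ μ(s) a + (1 - μ(s)) t ≤ a`. Integrating in `x` gives the first
inequality, and the comparison of the two limit risks is the same inequality with the common
log-partition term added to both sides.
-/

section SetAverage

variable {α E : Type*} [MeasurableSpace α] {μ : Measure α}
  [NormedAddCommGroup E] [NormedSpace ℝ E]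

theorem integral_le_setAverage_of_le_of_ge [IsProbabilityMeasure μ] {g : α → ℝ} {s : Set α}
    {t : ℝ} (hg : Integrable g μ) (hs : MeasurableSet s) (hμs : μ s ≠ 0)
    (h_ge : ∀ x ∈ s, t ≤ g x) (h_le : ∀ x ∉ s, g x ≤ t) :
    ∫ x, g x ∂μ ≤ ⨍ x in s, g x ∂μ := by
  set a := ⨍ x in s, g x ∂μ
  have hpos : 0 < μ.real s := ENNReal.toReal_pos hμs (measure_ne_top μ s)
  have h_on : ∫ x in s, g x ∂μ = μ.real s * a :=
    (measure_smul_setAverage g (measure_ne_top μ s)).symm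
  have h_off : ∫ x in sᶜ, g x ∂μ ≤ t * (1 - μ.real s) := by
    calc ∫ x in sᶜ, g x ∂μ ≤ ∫ _ in sᶜ, t ∂μ :=
          setIntegral_mono_on hg.integrableOn (integrableOn_const (measure_ne_top μ _))
            hs.compl h_le
      _ = t * (1 - μ.real s) := by
          rw [setIntegral_const, probReal_compl_eq_one_sub hs, smul_eq_mul, mul_comm]
  have ht : t ≤ a := by
    have := setIntegral_ge_of_const_le_real hs (measure_ne_top μ s) h_ge hg.integrableOn
    rw [h_on, mul_comm] at this
    exact le_of_mul_le_mul_left this hpos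
  calc ∫ x, g x ∂μ = μ.real s * a + ∫ x in sᶜ, g x ∂μ := by
        rw [← h_on, integral_add_compl hs hg]
    _ ≤ μ.real s * a + (1 - μ.real s) * a := by
        have : t * (1 - μ.real s) ≤ a * (1 - μ.real s) :=
          mul_le_mul_of_nonneg_right ht (sub_nonneg.2 measureReal_le_one)
        linarith
    _ = a := by ring

theorem norm_setAverage_le_of_norm_le_const [IsFiniteMeasure μ] {g : α → E} {s : Set α}
    {C : ℝ} (hC : 0 ≤ C) (h : ∀ x ∈ s, ‖g x‖ ≤ C) :
    ‖⨍ x in s, g x ∂μ‖ ≤ C := by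
  rcases eq_or_ne (μ s) 0 with hμs | hμs
  · rw [Measure.restrict_eq_zero.2 hμs, average_zero_measure, norm_zero]
    exact hC
  have hpos : 0 < μ.real s := ENNReal.toReal_pos hμs (measure_ne_top μ s)
  rw [setAverage_eq, norm_smul, Real.norm_of_nonneg (inv_nonneg.2 hpos.le),
    inv_mul_le_iff₀ hpos, mul_comm]
  exact norm_setIntegral_le_of_norm_le_const (measure_lt_top μ s) h

theorem MeasureTheory.StronglyMeasurable.setAverage_prodMk_preimage {β : Type*} [MeasurableSpace β]
    {ν : Measure β} [SFinite ν] {g : α × β → E} (hg : StronglyMeasurable g)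
    {S : Set (α × β)} (hS : MeasurableSet S) :
    StronglyMeasurable fun x => ⨍ y in Prod.mk x ⁻¹' S, g (x, y) ∂ν := by
  have h_indicator : ∀ x, ∫ y in Prod.mk x ⁻¹' S, g (x, y) ∂ν = ∫ y, S.indicator g (x, y) ∂ν :=
    fun x => (integral_indicator (measurable_prodMk_left hS)).symm
  simp only [setAverage_eq, h_indicator]
  exact ((measurable_measure_prodMk_left hS).ennreal_toReal.inv).stronglyMeasurable.smul
    (hg.indicator hS).integral_prod_right'

end SetAverage

theorem infoNCE_NN_additional_risk_le_general
    {X : Type*} [MeasurableSpace X] (μ : Measure X) [IsProbabilityMeasure μ]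
    (d : ℕ)
    (f : X → EuclideanSpace ℝ (Fin d)) (hf : Measurable f)
    (B : ℝ) (hB : ∀ x, ‖f x‖ ≤ B)
    (t : ℝ)
    (hN : ∀ᵐ x ∂μ, 0 < μ {x' | t ≤ (inner ℝ (f x) (f x') : ℝ)}) :
    (∫ x, ∫ x', (inner ℝ (f x) (f x') : ℝ) ∂μ ∂μ)
      ≤ ∫ x, (μ {x' | t ≤ (inner ℝ (f x) (f x') : ℝ)}).toReal⁻¹ *
          ∫ x' in {x' | t ≤ (inner ℝ (f x) (f x') : ℝ)}, (inner ℝ (f x) (f x') : ℝ) ∂μ ∂μ ∧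
    -(∫ x, (μ {x' | t ≤ (inner ℝ (f x) (f x') : ℝ)}).toReal⁻¹ *
          ∫ x' in {x' | t ≤ (inner ℝ (f x) (f x') : ℝ)}, (inner ℝ (f x) (f x') : ℝ) ∂μ ∂μ)
        + ∫ x, Real.log (∫ x', Real.exp ((inner ℝ (f x) (f x') : ℝ)) ∂μ) ∂μ
      ≤ -(∫ x, ∫ x', (inner ℝ (f x) (f x') : ℝ) ∂μ ∂μ)
        + ∫ x, Real.log (∫ x', Real.exp ((inner ℝ (f x) (f x') : ℝ)) ∂μ) ∂μ := by
  have hg : Measurable fun q : X × X => (inner ℝ (f q.1) (f q.2) : ℝ) :=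
    (hf.comp measurable_fst).inner (hf.comp measurable_snd)
  have h_bound : ∀ x x', ‖(inner ℝ (f x) (f x') : ℝ)‖ ≤ B * B := fun x x' =>
    (norm_inner_le_norm _ _).trans
      (mul_le_mul (hB x) (hB x') (norm_nonneg _) ((norm_nonneg _).trans (hB x)))
  have hS : MeasurableSet {q : X × X | t ≤ (inner ℝ (f q.1) (f q.2) : ℝ)} :=
    measurableSet_le measurable_const hg
  have h_int : Integrable (fun q : X × X => (inner ℝ (f q.1) (f q.2) : ℝ)) (μ.prod μ) :=
    .of_bound hg.aestronglyMeasurable (B * B) (.of_forall fun q => h_bound q.1 q.2)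
  have h_avg_int : Integrable (fun x =>
      ⨍ x' in {x' | t ≤ (inner ℝ (f x) (f x') : ℝ)}, (inner ℝ (f x) (f x') : ℝ) ∂μ) μ :=
    .of_bound (hg.stronglyMeasurable.setAverage_prodMk_preimage hS).aestronglyMeasurable (B * B)
      (.of_forall fun x => norm_setAverage_le_of_norm_le_const (mul_self_nonneg B)
        fun x' _ => h_bound x x')
  have key := integral_mono_ae h_int.integral_prod_left h_avg_int <| by
    filter_upwards [hN, h_int.prod_right_ae] with x hx hx_int
    exact integral_le_setAverage_of_le_of_ge hx_int (measurable_prodMk_left hS) hx.ne'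
      (fun _ h => h) (fun _ h => (not_le.1 h).le)
  simp only [setAverage_eq, smul_eq_mul, measureReal_def] at key
  exact ⟨key, by linarith⟩

/-- Nearest-neighbor positive selection: the anchor-averaged similarity with positives
restricted to the neighborhood N(x;t) = {x' : ⟨f(x),f(x')⟩ ≥ t} is at least the
unrestricted average similarity; consequently the limit additional risk of InfoNCE-NN
is at most that of plain InfoNCE. -/
theorem infoNCE_NN_additional_risk_le
    {X : Type*} [MeasurableSpace X] (μ : Measure X) [IsProbabilityMeasure μ]
    (d : ℕ) (hd : 1 ≤ d)
    (f : X → EuclideanSpace ℝ (Fin d)) (hf : Measurable f)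
    (B : ℝ) (hB : ∀ x, ‖f x‖ ≤ B)
    (t : ℝ)
    (hN : ∀ᵐ x ∂μ, 0 < μ {x' | t ≤ (inner ℝ (f x) (f x') : ℝ)}) :
    (∫ x, ∫ x', (inner ℝ (f x) (f x') : ℝ) ∂μ ∂μ)
      ≤ ∫ x, (μ {x' | t ≤ (inner ℝ (f x) (f x') : ℝ)}).toReal⁻¹ *
          ∫ x' in {x' | t ≤ (inner ℝ (f x) (f x') : ℝ)}, (inner ℝ (f x) (f x') : ℝ) ∂μ ∂μ ∧
    -(∫ x, (μ {x' | t ≤ (inner ℝ (f x) (f x') : ℝ)}).toReal⁻¹ *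
          ∫ x' in {x' | t ≤ (inner ℝ (f x) (f x') : ℝ)}, (inner ℝ (f x) (f x') : ℝ) ∂μ ∂μ)
        + ∫ x, Real.log (∫ x', Real.exp ((inner ℝ (f x) (f x') : ℝ)) ∂μ) ∂μ
      ≤ -(∫ x, ∫ x', (inner ℝ (f x) (f x') : ℝ) ∂μ ∂μ)
        + ∫ x, Real.log (∫ x', Real.exp ((inner ℝ (f x) (f x') : ℝ)) ∂μ) ∂μ :=
  infoNCE_NN_additional_risk_le_general μ d f hf B hB t hN
end
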